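/- arXiv:2011.11619 — 9 statements merged into one kernel-verified Lean document; each statement's English description precedes it below -/
import Mathlib

section
/- If (H, W, b) with H ∈ ℝ^{p×CN}, W ∈ ℝ^{C×p}, b ∈ ℝ^C exhibits strong neural collapse, then the empirical risk vanishes: R_e(H, W, b) = 0. -/
/-!
Under SNC2 the logits `W H` are the Gram matrix `W Wᵀ`, rescaled by `1/√N` and repeated
over the `N` samples of each class. By SNC1 that rescaled Gram matrix is the simplex matrix
`I_C - (1/C) 1 1ᵀ`, and the bias `(1/C) 1_C` of SNC3 adds back exactly the constant `1/C`,
so the logits reproduce the one-hot targets `I_C ⊗ 1_Nᵀ` entry by entry.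
-/

open Matrix

section

variable {ι κ ν R : Type*}

theorem mul_of_mul_transpose_comp_fst [Fintype κ] [CommSemiring R] (W : Matrix ι κ R) (s : R) :
    W * Matrix.of (fun j (cn : ι × ν) => s * W cn.1 j) =
      Matrix.of fun c cn => s * (W * Wᵀ) c cn.1 := by
  ext c cn
  simp only [mul_apply, of_apply, transpose_apply, Finset.mul_sum]
  exact Finset.sum_congr rfl fun j _ => mul_left_comm _ _ _

theorem inv_mul_smul_one_sub_smul_ones_apply_add [DecidableEq ι] [Field R] {s : R} (hs : s ≠ 0)
    (a : R) (i j : ι) :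
    s⁻¹ * (s • ((1 : Matrix ι ι R) - a • of fun _ _ => (1 : R)) : Matrix ι ι R) i j + a =
      if j = i then 1 else 0 := by
  rw [Matrix.smul_apply, Matrix.sub_apply, Matrix.smul_apply, of_apply, one_apply, smul_eq_mul,
    smul_eq_mul, inv_mul_cancel_left₀ hs, mul_one, sub_add_cancel]
  exact if_congr eq_comm rfl rfl

end

/-- The `CN` columns are indexed by `Fin C × Fin N`, so that
`I_C ⊗ 1_Nᵀ` has `(c, (c', n))` entry `if c' = c then 1 else 0` and
`(W ⊗ 1_N)ᵀ` has `(j, (c, n))` entry `W c j`. -/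
theorem empirical_risk_eq_zero_of_snc_general (C N p : ℕ) (hN : 0 < N)
    (H : Matrix (Fin p) (Fin C × Fin N) ℝ)
    (W : Matrix (Fin C) (Fin p) ℝ) (b : Fin C → ℝ)
    (snc1 : W * Wᵀ = Real.sqrt N •
      ((1 : Matrix (Fin C) (Fin C) ℝ) - (C : ℝ)⁻¹ • Matrix.of (fun _ _ => (1 : ℝ))))
    (snc2 : H = Matrix.of (fun j (cn : Fin C × Fin N) => (Real.sqrt N)⁻¹ * W cn.1 j))
    (snc3 : b = fun _ => (C : ℝ)⁻¹) :
    (1 / 2 : ℝ) * ∑ c : Fin C, ∑ cn : Fin C × Fin N,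
      ((W * H) c cn + b c - if cn.1 = c then 1 else 0) ^ 2 = 0 := by
  have hs : Real.sqrt N ≠ 0 := Real.sqrt_ne_zero'.mpr (Nat.cast_pos.mpr hN)
  refine mul_eq_zero_of_right _ (Finset.sum_eq_zero fun c _ => Finset.sum_eq_zero fun cn _ => ?_)
  rw [snc2, mul_of_mul_transpose_comp_fst, of_apply, snc1, snc3,
    inv_mul_smul_one_sub_smul_ones_apply_add hs, sub_self, sq, mul_zero]

/-- If `(H, W, b)` exhibits strong neural collapse
(SNC1: `W Wᵀ = √N (I_C - (1/C) 1 1ᵀ)`, SNC2: `H = (1/√N)(W ⊗ 1_N)ᵀ`,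
SNC3: `b = (1/C) 1_C`), then the empirical risk
`R_e(H,W,b) = (1/2)‖W H + b 1ᵀ - I_C ⊗ 1_Nᵀ‖_F²` vanishes.
The `CN` columns are indexed by `Fin C × Fin N`, so that
`I_C ⊗ 1_Nᵀ` has `(c, (c', n))` entry `if c' = c then 1 else 0` and
`(W ⊗ 1_N)ᵀ` has `(j, (c, n))` entry `W c j`. -/
theorem empirical_risk_eq_zero_of_snc (C N p : ℕ) (hC : 0 < C) (hN : 0 < N) (hp : 0 < p)
    (H : Matrix (Fin p) (Fin C × Fin N) ℝ)
    (W : Matrix (Fin C) (Fin p) ℝ) (b : Fin C → ℝ)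
    (snc1 : W * Wᵀ = Real.sqrt N •
      ((1 : Matrix (Fin C) (Fin C) ℝ) - (C : ℝ)⁻¹ • Matrix.of (fun _ _ => (1 : ℝ))))
    (snc2 : H = Matrix.of (fun j (cn : Fin C × Fin N) => (Real.sqrt N)⁻¹ * W cn.1 j))
    (snc3 : b = fun _ => (C : ℝ)⁻¹) :
    (1 / 2 : ℝ) * ∑ c : Fin C, ∑ cn : Fin C × Fin N,
      ((W * H) c cn + b c - if cn.1 = c then 1 else 0) ^ 2 = 0 :=
  empirical_risk_eq_zero_of_snc_general C N p hN H W b snc1 snc2 snc3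
end

section
/- Suppose (H, W, b) exhibits strong neural collapse and C ≥ 2. Let w_c^⊤ denote the c-th row of W and let M ∈ ℝ^{p×C} have columns w_c/‖w_c‖₂. Then M^⊤ M = (C/(C−1))·I_C − (1/(C−1))·1_C 1_C^⊤; i.e., the normalized class means form a simplex equiangular tight frame. -/
open Matrix

/-- Suppose `(H, W, b)` exhibits strong neural collapse and `C ≥ 2`.
Let `w_cᵀ` be the `c`-th row of `W` and let `M ∈ ℝ^{p×C}` have columns `w_c / ‖w_c‖₂`.
Then `Mᵀ M = (C/(C-1)) I_C - (1/(C-1)) 1_C 1_Cᵀ`, i.e. the normalized class means form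
a simplex equiangular tight frame. -/
theorem simplex_etf_of_snc (C N p : ℕ) (hC : 2 ≤ C) (hN : 0 < N) (hp : 0 < p)
    (H : Matrix (Fin p) (Fin C × Fin N) ℝ)
    (W : Matrix (Fin C) (Fin p) ℝ) (b : Fin C → ℝ)
    (snc1 : W * Wᵀ = Real.sqrt N •
      ((1 : Matrix (Fin C) (Fin C) ℝ) - (C : ℝ)⁻¹ • Matrix.of (fun _ _ => (1 : ℝ))))
    (snc2 : H = Matrix.of (fun j (cn : Fin C × Fin N) => (Real.sqrt N)⁻¹ * W cn.1 j))
    (snc3 : b = fun _ => (C : ℝ)⁻¹)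
    (M : Matrix (Fin p) (Fin C) ℝ)
    (hM : M = Matrix.of (fun j c => W c j / Real.sqrt (∑ k : Fin p, (W c k) ^ 2))) :
    Mᵀ * M = ((C : ℝ) / ((C : ℝ) - 1)) • (1 : Matrix (Fin C) (Fin C) ℝ)
      - (((C : ℝ) - 1))⁻¹ • Matrix.of (fun _ _ => (1 : ℝ)) := by
  have hC1 : (2 : ℝ) ≤ (C : ℝ) := by exact_mod_cast hC
  have hCpos : (0 : ℝ) < C := by linarith
  have hCm1 : (0 : ℝ) < (C : ℝ) - 1 := by linarith
  have hsqN : (0 : ℝ) < Real.sqrt N := Real.sqrt_pos.mpr (by exact_mod_cast hN)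
  have hval : (0 : ℝ) < Real.sqrt N * (1 - (C : ℝ)⁻¹) := by
    apply mul_pos hsqN
    have : (C : ℝ)⁻¹ < 1 := by
      rw [inv_lt_one_iff₀]; right; linarith
    linarith
  have hentry : ∀ c c' : Fin C, ∑ k : Fin p, W c k * W c' k =
      Real.sqrt N * ((if c = c' then (1:ℝ) else 0) - (C : ℝ)⁻¹) := by
    intro c c'
    have h1 := congrFun (congrFun snc1 c) c'
    simpa [Matrix.mul_apply, Matrix.transpose_apply, Matrix.smul_apply,
      Matrix.sub_apply, Matrix.one_apply, mul_sub] using h1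
  have hdiag : ∀ c : Fin C, ∑ k : Fin p, (W c k) ^ 2 =
      Real.sqrt N * (1 - (C : ℝ)⁻¹) := by
    intro c
    have := hentry c c
    simpa [pow_two] using this
  set t : ℝ := Real.sqrt (Real.sqrt N * (1 - (C : ℝ)⁻¹)) with ht
  have htpos : 0 < t := Real.sqrt_pos.mpr hval
  have ht2 : t * t = Real.sqrt N * (1 - (C : ℝ)⁻¹) :=
    Real.mul_self_sqrt hval.le
  ext c c'
  have hMcol : ∀ (c : Fin C) (k : Fin p), M k c = W c k / t := by
    intro c k
    rw [hM]
    simp [hdiag c, ht]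
  have hsum : (Mᵀ * M) c c' = (∑ k : Fin p, W c k * W c' k) / (t * t) := by
    simp only [Matrix.mul_apply, Matrix.transpose_apply, hMcol]
    rw [Finset.sum_div]
    congr 1; ext k; field_simp
  rw [hsum, ht2, hentry c c']
  by_cases h : c = c'
  · subst h
    simp only [Matrix.sub_apply, Matrix.smul_apply, Matrix.one_apply_eq,
      Matrix.of_apply, if_pos rfl, smul_eq_mul, mul_one]
    rw [if_true, div_self hval.ne']
    field_simp
  · simp only [Matrix.sub_apply, Matrix.smul_apply, Matrix.one_apply_ne h,
      Matrix.of_apply, if_neg h, smul_eq_mul, mul_zero, mul_one, zero_sub]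
    rw [div_eq_iff hval.ne']
    field_simp
end

section
/- Suppose (H, W, b) exhibits strong neural collapse and C ≥ 2. Let w_c^⊤ denote the c-th row of W and let M ∈ ℝ^{p×C} have columns w_c/‖w_c‖₂. Then W^⊤/‖W‖_F = M/‖M‖_F (self-duality, NC3). -/
open Matrix

/-- Suppose `(H, W, b)` exhibits strong neural collapse and `C ≥ 2`.
Let `w_cᵀ` be the `c`-th row of `W` and let `M ∈ ℝ^{p×C}` have columns `w_c / ‖w_c‖₂`.
Then `Wᵀ / ‖W‖_F = M / ‖M‖_F` (self-duality, NC3), where `‖·‖_F` is the Frobenius norm. -/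
theorem self_duality_of_snc (C N p : ℕ) (hC : 2 ≤ C) (hN : 0 < N) (hp : 0 < p)
    (H : Matrix (Fin p) (Fin C × Fin N) ℝ)
    (W : Matrix (Fin C) (Fin p) ℝ) (b : Fin C → ℝ)
    (snc1 : W * Wᵀ = Real.sqrt N •
      ((1 : Matrix (Fin C) (Fin C) ℝ) - (C : ℝ)⁻¹ • Matrix.of (fun _ _ => (1 : ℝ))))
    (snc2 : H = Matrix.of (fun j (cn : Fin C × Fin N) => (Real.sqrt N)⁻¹ * W cn.1 j))
    (snc3 : b = fun _ => (C : ℝ)⁻¹)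
    (M : Matrix (Fin p) (Fin C) ℝ)
    (hM : M = Matrix.of (fun j c => W c j / Real.sqrt (∑ k : Fin p, (W c k) ^ 2))) :
    (Real.sqrt (∑ c : Fin C, ∑ j : Fin p, (W c j) ^ 2))⁻¹ • Wᵀ
      = (Real.sqrt (∑ j : Fin p, ∑ c : Fin C, (M j c) ^ 2))⁻¹ • M := by
  set s : ℝ := Real.sqrt N * (1 - (C : ℝ)⁻¹) with hs
  have hCpos : (0 : ℝ) < C := by positivity
  have hsqrtN : (1 : ℝ) ≤ Real.sqrt N := by
    rw [show (1:ℝ) = Real.sqrt 1 by simp]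
    exact Real.sqrt_le_sqrt (by exact_mod_cast hN)
  have hCinv : (C : ℝ)⁻¹ < 1 := by
    rw [inv_lt_one_iff₀]; right; exact_mod_cast lt_of_lt_of_le one_lt_two (by exact_mod_cast hC)
  have hspos : 0 < s := by
    apply mul_pos (lt_of_lt_of_le one_pos hsqrtN); linarith
  have hrow : ∀ c : Fin C, (∑ k : Fin p, (W c k) ^ 2) = s := by
    intro c
    have := congrFun (congrFun snc1 c) c
    simp only [Matrix.mul_apply, Matrix.transpose_apply, Matrix.smul_apply,
      Matrix.sub_apply, Matrix.one_apply_eq, Matrix.smul_apply, Matrix.of_apply,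
      smul_eq_mul] at this
    simp only [mul_one] at this
    rw [hs, ← this]
    congr 1; ext k; ring
  have hWsum : (∑ c : Fin C, ∑ j : Fin p, (W c j) ^ 2) = C * s := by
    simp [hrow, Finset.sum_const, nsmul_eq_mul]
  have hMsum : (∑ j : Fin p, ∑ c : Fin C, (M j c) ^ 2) = C := by
    rw [Finset.sum_comm]
    have : ∀ c : Fin C, (∑ j : Fin p, (M j c) ^ 2) = 1 := by
      intro c
      simp only [hM, Matrix.of_apply, div_pow, hrow c]
      rw [← Finset.sum_div, hrow c, Real.sq_sqrt hspos.le, div_self hspos.ne']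
    simp [this]
  rw [hWsum, hMsum, hM]
  ext j c
  simp only [Matrix.smul_apply, Matrix.transpose_apply, Matrix.of_apply, smul_eq_mul, hrow c]
  rw [Real.sqrt_mul hCpos.le]
  rw [mul_inv]
  have h1 : Real.sqrt s ≠ 0 := Real.sqrt_ne_zero'.mpr hspos
  field_simp
end

section
/- Suppose (H, W, b) exhibits strong neural collapse, and set μ_c := (1/√N)·w_c where w_c^⊤ is the c-th row of W. Then for every z ∈ ℝ^p and every pair c, c' ∈ [C]: (W z + b)_c ≥ (W z + b)_{c'} if and only if ‖z − μ_c‖₂ ≤ ‖z − μ_{c'}‖₂. In particular, the linear classifier z ↦ argmax_c (W z + b)_c agrees with the nearest-class-center rule z ↦ argmin_c ‖z − μ_c‖₂ (NC4). -/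
open Matrix

/-- Suppose `(H, W, b)` exhibits strong neural collapse, and set
`μ_c := (1/√N) w_c` where `w_cᵀ` is the `c`-th row of `W`. Then for every `z ∈ ℝ^p`
and every pair `c, c'`: `(W z + b)_c ≥ (W z + b)_{c'}` iff `‖z - μ_c‖₂ ≤ ‖z - μ_{c'}‖₂`.
In particular the linear classifier `z ↦ argmax_c (W z + b)_c` agrees with the
nearest-class-center rule `z ↦ argmin_c ‖z - μ_c‖₂` (NC4). -/
theorem nearest_class_center_of_snc (C N p : ℕ) (hC : 0 < C) (hN : 0 < N) (hp : 0 < p)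
    (H : Matrix (Fin p) (Fin C × Fin N) ℝ)
    (W : Matrix (Fin C) (Fin p) ℝ) (b : Fin C → ℝ)
    (snc1 : W * Wᵀ = Real.sqrt N •
      ((1 : Matrix (Fin C) (Fin C) ℝ) - (C : ℝ)⁻¹ • Matrix.of (fun _ _ => (1 : ℝ))))
    (snc2 : H = Matrix.of (fun j (cn : Fin C × Fin N) => (Real.sqrt N)⁻¹ * W cn.1 j))
    (snc3 : b = fun _ => (C : ℝ)⁻¹) :
    ∀ (z : Fin p → ℝ) (c c' : Fin C),
      ((W *ᵥ z) c + b c ≥ (W *ᵥ z) c' + b c') ↔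
        Real.sqrt (∑ j : Fin p, (z j - (Real.sqrt N)⁻¹ * W c j) ^ 2)
          ≤ Real.sqrt (∑ j : Fin p, (z j - (Real.sqrt N)⁻¹ * W c' j) ^ 2) := by
  intro z c c'
  have hsN : (0:ℝ) < Real.sqrt N := Real.sqrt_pos.mpr (by exact_mod_cast hN)
  set a : ℝ := (Real.sqrt N)⁻¹ with ha
  have haPos : 0 < a := inv_pos.mpr hsN
  have hdiag : ∀ d : Fin C, ∑ j, W d j ^ 2 = Real.sqrt N * (1 - (C:ℝ)⁻¹) := by
    intro d
    have h := congrFun (congrFun snc1 d) d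
    simpa [Matrix.mul_apply, Matrix.transpose_apply, Matrix.one_apply, Matrix.smul_apply,
      Matrix.sub_apply, pow_two, mul_sub] using h
  have hexp : ∀ d : Fin C, ∑ j : Fin p, (z j - a * W d j) ^ 2
      = ∑ j, z j ^ 2 - 2 * a * ((W *ᵥ z) d) + a ^ 2 * (Real.sqrt N * (1 - (C:ℝ)⁻¹)) := by
    intro d
    rw [← hdiag d, Matrix.mulVec, dotProduct]
    rw [Finset.mul_sum, Finset.mul_sum, ← Finset.sum_sub_distrib,
      ← Finset.sum_add_distrib]
    apply Finset.sum_congr rfl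
    intro j _
    ring
  have hsum : (∑ j : Fin p, (z j - a * W c j) ^ 2 ≤ ∑ j : Fin p, (z j - a * W c' j) ^ 2)
      ↔ ((W *ᵥ z) c' ≤ (W *ᵥ z) c) := by
    rw [hexp c, hexp c']
    constructor <;> intro h <;> nlinarith [haPos]
  have hnonneg : (0:ℝ) ≤ ∑ j : Fin p, (z j - a * W c' j) ^ 2 :=
    Finset.sum_nonneg fun j _ => sq_nonneg _
  have hb : b c = b c' := by rw [snc3]
  rw [ge_iff_le, hb, add_le_add_iff_right]
  constructor
  · intro h
    exact Real.sqrt_le_sqrt (hsum.mpr h)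
  · intro h
    exact hsum.mp ((Real.sqrt_le_sqrt_iff hnonneg).mp h)
end

section
/- Let H : [0,∞) → ℝ^{p×CN}, W : [0,∞) → ℝ^{C×p}, b : [0,∞) → ℝ^C be differentiable and satisfy H'(t) = −W(t)^⊤ Ã(t), W'(t) = −Ã(t) H(t)^⊤, b'(t) = −Ã(t) 1_{CN}, where Ã(t) := b(t)·1_{CN}^⊤ − I_C ⊗ 1_N^⊤, with initial conditions H(0) = H₀, W(0) = W₀, b(0) = 0. Then for all t ≥ 0: ‖(H(t), W(t)) − e^{√N·t}·Π_T(H₀, W₀)‖_E ≤ e^{1/(C√N)}·‖(H₀, W₀) − Π_T(H₀, W₀)‖_E, and b(t) = ((1 − e^{−CNt})/C)·1_C. -/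
/-!
Solving the decoupled equation for `b` gives `b(t) = β(t) 1_C` with `β = (1 - σ) / C` and
`σ(t) = e^{-CNt}`, after which `x = (H, W)` solves the linear equation `x' = L_{β(t)} x`,
`L_β (H, W) = (-Wᵀ Ã_β, -Ã_β Hᵀ)`. Every `L_β` is self-adjoint and acts on `T` as `√N`, so
`v(t) = x(t) - e^{√N t} Π_T x(0)` solves the same equation and stays in `Tᗮ`. Column by column,
Cauchy–Schwarz bounds the quadratic form of `L_β` on `Tᗮ` by `√N σ`, and Grönwall's inequality gives
`‖v(t)‖ ≤ exp (∫₀^∞ √N σ) ‖v(0)‖ = e^{1/(C√N)} ‖v(0)‖`.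
-/

open Matrix Set

attribute [local instance] Matrix.normedAddCommGroup Matrix.normedSpace

noncomputable section

/-- Index set for the pair space `ℝ^{p×CN} ⊕ ℝ^{C×p}`; the `CN` columns are indexed
by `Fin C × Fin N`. -/
abbrev PairIdx (C N p : ℕ) := (Fin p × (Fin C × Fin N)) ⊕ (Fin C × Fin p)

/-- The pair space `ℝ^{p×CN} ⊕ ℝ^{C×p}` with the norm
`‖(H,W)‖_E² = ‖H‖_F² + ‖W‖_F²` induced by the Frobenius inner product. -/
abbrev PairSpace (C N p : ℕ) := EuclideanSpace ℝ (PairIdx C N p)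

/-- Embedding of a pair of matrices `(H, W)` into the pair space. -/
def emb {C N p : ℕ} (H : Matrix (Fin p) (Fin C × Fin N) ℝ)
    (W : Matrix (Fin C) (Fin p) ℝ) : PairSpace C N p :=
  WithLp.toLp 2 (fun i => Sum.elim (fun jcn => H jcn.1 jcn.2) (fun cj => W cj.1 cj.2) i)

/-- The subspace `T = {(H, W) : H = (1/√N)(W ⊗ 1_N)ᵀ, 1_Cᵀ W = 0}`. -/
def Tsub (C N p : ℕ) : Submodule ℝ (PairSpace C N p) where
  carrier := {x | (∀ (j : Fin p) (c : Fin C) (n : Fin N),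
      x (Sum.inl (j, (c, n))) = (Real.sqrt N)⁻¹ * x (Sum.inr (c, j))) ∧
    (∀ j : Fin p, ∑ c : Fin C, x (Sum.inr (c, j)) = 0)}
  add_mem' := by
    intro a b ha hb
    refine ⟨fun j c n => ?_, fun j => ?_⟩
    · simp only [PiLp.add_apply, ha.1 j c n, hb.1 j c n]; ring
    · simp only [PiLp.add_apply, Finset.sum_add_distrib, ha.2 j, hb.2 j]; ring
  zero_mem' := by
    refine ⟨fun j c n => ?_, fun j => ?_⟩
    · simp [PiLp.zero_apply]
    · simp [PiLp.zero_apply]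
  smul_mem' := by
    intro r a ha
    refine ⟨fun j c n => ?_, fun j => ?_⟩
    · simp only [PiLp.smul_apply, ha.1 j c n, smul_eq_mul]; ring
    · simp only [PiLp.smul_apply, smul_eq_mul, ← Finset.mul_sum, ha.2 j, mul_zero]

theorem eq_exp_mul_smul_of_hasDerivWithinAt {E : Type*} [NormedAddCommGroup E] [NormedSpace ℝ E]
    {f : ℝ → E} {k : ℝ} (hf : ∀ t ∈ Ici (0 : ℝ), HasDerivWithinAt f (k • f t) (Ici 0) t) :
    ∀ t ∈ Ici (0 : ℝ), f t = Real.exp (k * t) • f 0 := by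
  have hg : ∀ t ∈ Ici (0 : ℝ),
      HasDerivWithinAt (fun s => Real.exp (-k * s) • f s) 0 (Ici 0) t := by
    intro t ht
    have he : HasDerivAt (fun s => Real.exp (-k * s)) (Real.exp (-k * t) * -k) t := by
      simpa using ((hasDerivAt_id t).const_mul (-k)).exp
    refine (he.hasDerivWithinAt.smul (hf t ht)).congr_deriv ?_
    rw [smul_smul]; module
  intro t ht
  have hconst := constant_of_has_deriv_right_zero
    (fun s hs => (hg s (Icc_subset_Ici_self hs)).continuousWithinAt.mono Icc_subset_Ici_self)
    (fun s hs => (hg s hs.1).mono (Ici_subset_Ici.2 hs.1)) t ⟨ht, le_rfl⟩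
  rw [mul_zero, Real.exp_zero, one_smul] at hconst
  rw [← hconst, smul_smul, ← Real.exp_add]
  simp

theorem inner_eq_exp_mul_of_hasDerivWithinAt {F : Type*} [NormedAddCommGroup F]
    [InnerProductSpace ℝ F] {v : ℝ → F} {L : ℝ → F →ₗ[ℝ] F} {y : F} {k : ℝ}
    (hv : ∀ t ∈ Ici (0 : ℝ), HasDerivWithinAt v (L t (v t)) (Ici 0) t)
    (hL : ∀ t x, inner ℝ (L t x) y = inner ℝ x (L t y)) (hy : ∀ t, L t y = k • y) :
    ∀ t ∈ Ici (0 : ℝ), inner ℝ (v t) y = Real.exp (k * t) * inner ℝ (v 0) y :=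
  eq_exp_mul_smul_of_hasDerivWithinAt fun t ht =>
    ((hv t ht).inner ℝ (hasDerivWithinAt_const t _ y)).congr_deriv (by
      rw [inner_zero_right, zero_add, hL, hy, real_inner_smul_right, smul_eq_mul])

theorem hasDerivWithinAt_sub_exp_smul {E : Type*} [NormedAddCommGroup E] [NormedSpace ℝ E]
    {x : ℝ → E} {L : E →ₗ[ℝ] E} {k : ℝ} {u : E} {s : Set ℝ} {t : ℝ}
    (hx : HasDerivWithinAt x (L (x t)) s t) (hu : L u = k • u) :
    HasDerivWithinAt (fun t => x t - Real.exp (k * t) • u)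
      (L (x t - Real.exp (k * t) • u)) s t := by
  have he : HasDerivAt (fun t => Real.exp (k * t)) (Real.exp (k * t) * k) t := by
    simpa using ((hasDerivAt_id t).const_mul k).exp
  refine (hx.sub (he.hasDerivWithinAt.smul_const u)).congr_deriv ?_
  rw [map_sub, map_smul, hu, smul_smul, mul_comm]

theorem norm_le_exp_sub_mul_of_inner_deriv_le {F : Type*} [NormedAddCommGroup F]
    [InnerProductSpace ℝ F] {v v' : ℝ → F} {r ρ : ℝ → ℝ}
    (hv : ∀ t ∈ Ici (0 : ℝ), HasDerivWithinAt v (v' t) (Ici 0) t)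
    (hr : ∀ t, HasDerivAt r (ρ t) t)
    (hle : ∀ t ∈ Ici (0 : ℝ), inner ℝ (v' t) (v t) ≤ ρ t * ‖v t‖ ^ 2) :
    ∀ t ∈ Ici (0 : ℝ), ‖v t‖ ≤ Real.exp (r t - r 0) * ‖v 0‖ := by
  set φ : ℝ → ℝ := fun t => Real.exp (-2 * r t) * ‖v t‖ ^ 2
  have hφ : ∀ t ∈ Ici (0 : ℝ), HasDerivWithinAt φ
      (2 * Real.exp (-2 * r t) * (inner ℝ (v' t) (v t) - ρ t * ‖v t‖ ^ 2)) (Ici 0) t := by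
    intro t ht
    refine ((((hr t).const_mul (-2)).exp).hasDerivWithinAt.mul (hv t ht).norm_sq).congr_deriv ?_
    rw [real_inner_comm]; ring
  have hanti : AntitoneOn φ (Ici 0) := by
    refine antitoneOn_of_hasDerivWithinAt_nonpos (convex_Ici 0) (f' := fun t =>
      2 * Real.exp (-2 * r t) * (inner ℝ (v' t) (v t) - ρ t * ‖v t‖ ^ 2))
      (fun t ht => (hφ t ht).continuousWithinAt) (fun t ht => ?_) (fun t ht => ?_)
    · rw [interior_Ici] at ht ⊢
      exact (hφ t (Ioi_subset_Ici_self ht)).mono Ioi_subset_Ici_self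
    · rw [interior_Ici] at ht
      have := sub_nonpos.2 (hle t (Ioi_subset_Ici_self ht))
      have := Real.exp_pos (-2 * r t)
      nlinarith
  intro t ht
  have key : ‖v t‖ ^ 2 ≤ (Real.exp (r t - r 0) * ‖v 0‖) ^ 2 := calc
    ‖v t‖ ^ 2 = Real.exp (2 * r t) * φ t := by
      rw [← mul_assoc, ← Real.exp_add]; ring_nf; simp
    _ ≤ Real.exp (2 * r t) * φ 0 := by gcongr; exact hanti self_mem_Ici ht ht
    _ = (Real.exp (r t - r 0) * ‖v 0‖) ^ 2 := by
      rw [mul_pow, ← Real.exp_nat_mul, ← mul_assoc, ← Real.exp_add]; ring_nf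
  exact le_of_pow_le_pow_left₀ two_ne_zero (by positivity) key

lemma mul_sq_sum_le_one_add_mul_sum_sq {ι : Type*} [Fintype ι] {σ β : ℝ} (hσ : 0 ≤ σ)
    (hβ : β * Fintype.card ι = 1 - σ) (d : ι → ℝ) :
    β * (∑ i, d i) ^ 2 ≤ (1 + σ) * ∑ i, d i ^ 2 := by
  have hCS : (∑ i, d i) ^ 2 ≤ Fintype.card ι * ∑ i, d i ^ 2 := by
    simpa using sq_sum_le_card_mul_sum_sq (s := Finset.univ) (f := d)
  have hP : 0 ≤ ∑ i, d i ^ 2 := by positivity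
  rcases le_or_gt β 0 with hβ0 | hβ0
  · nlinarith [sq_nonneg (∑ i, d i)]
  · nlinarith [mul_le_mul_of_nonneg_left hCS hβ0.le]

lemma two_mul_sum_mul_sub_le {ι : Type*} [Fintype ι] {a w : ι → ℝ} {μ σ β : ℝ}
    (h : ∀ i, a i + w i = μ) (hσ : 0 ≤ σ) (hβ : β * Fintype.card ι = 1 - σ) :
    2 * (∑ i, a i * w i - β * (∑ i, a i) * ∑ i, w i) ≤
      σ * (∑ i, a i ^ 2 + ∑ i, w i ^ 2) := by
  have hd := mul_sq_sum_le_one_add_mul_sum_sq hσ hβ (fun i => a i - w i)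
  have hsum : ∑ i, a i + ∑ i, w i = Fintype.card ι * μ := by
    simp [← Finset.sum_add_distrib, h]
  have hsq : ∑ i, a i ^ 2 + 2 * ∑ i, a i * w i + ∑ i, w i ^ 2 = Fintype.card ι * μ ^ 2 := by
    have : ∀ i, a i ^ 2 + 2 * (a i * w i) + w i ^ 2 = μ ^ 2 := fun i => by rw [← h i]; ring
    simp [Finset.mul_sum, ← Finset.sum_add_distrib, this]
  simp only [Finset.sum_sub_distrib, sub_sq, Finset.sum_add_distrib, mul_assoc,
    ← Finset.mul_sum] at hd
  -- With `a = (μ + d) / 2` and `w = (μ - d) / 2`, the claim is exactly `hd`.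
  linear_combination (1 / 2 : ℝ) * hd - β / 2 * (∑ i, a i + ∑ i, w i + Fintype.card ι * μ) * hsum
    + (1 - σ) / 2 * hsq - Fintype.card ι * μ ^ 2 / 2 * hβ

lemma two_mul_sum_sub_mul_le {ι κ : Type*} [Fintype ι] [Fintype κ] [Nonempty κ]
    {h : ι → κ → ℝ} {w : ι → ℝ} {σ β : ℝ}
    (hconst : ∀ i i', (√(Fintype.card κ))⁻¹ * ∑ k, h i k + w i =
      (√(Fintype.card κ))⁻¹ * ∑ k, h i' k + w i')
    (hσ : 0 ≤ σ) (hβ : β * Fintype.card ι = 1 - σ) :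
    2 * ∑ i, (∑ k, h i k - β * ∑ i', ∑ k, h i' k) * w i ≤
      √(Fintype.card κ) * σ * (∑ i, ∑ k, h i k ^ 2 + ∑ i, w i ^ 2) := by
  set ρ := √(Fintype.card κ : ℝ)
  have hρ : 0 < ρ := Real.sqrt_pos.2 (by exact_mod_cast Fintype.card_pos)
  set a : ι → ℝ := fun i => ρ⁻¹ * ∑ k, h i k
  have hscalar : 2 * (∑ i, a i * w i - β * (∑ i, a i) * ∑ i, w i) ≤
      σ * (∑ i, a i ^ 2 + ∑ i, w i ^ 2) := by
    rcases isEmpty_or_nonempty ι with hι | ⟨⟨i₀⟩⟩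
    · simp
    · exact two_mul_sum_mul_sub_le (fun i => hconst i i₀) hσ hβ
  have ha : ∀ i, a i ^ 2 ≤ ∑ k, h i k ^ 2 := by
    intro i
    have hCS : (∑ k, h i k) ^ 2 ≤ Fintype.card κ * ∑ k, h i k ^ 2 := by
      simpa using sq_sum_le_card_mul_sum_sq (s := Finset.univ) (f := h i)
    rw [mul_pow, inv_pow, Real.sq_sqrt (Nat.cast_nonneg _)]
    rw [inv_mul_le_iff₀ (by exact_mod_cast Fintype.card_pos)]
    exact hCS
  have hρa : ∀ i, ρ * a i = ∑ k, h i k := fun i => by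
    simp only [a, ← mul_assoc, mul_inv_cancel₀ hρ.ne', one_mul]
  calc 2 * ∑ i, (∑ k, h i k - β * ∑ i', ∑ k, h i' k) * w i
      = 2 * (∑ i, (∑ k, h i k) * w i - β * (∑ i, ∑ k, h i k) * ∑ i, w i) := by
        simp only [sub_mul, Finset.sum_sub_distrib, ← Finset.mul_sum]
    _ = ρ * (2 * (∑ i, a i * w i - β * (∑ i, a i) * ∑ i, w i)) := by
        simp only [← hρa, mul_assoc, ← Finset.mul_sum]
        ring
    _ ≤ ρ * (σ * (∑ i, a i ^ 2 + ∑ i, w i ^ 2)) := by gcongr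
    _ ≤ ρ * σ * (∑ i, ∑ k, h i k ^ 2 + ∑ i, w i ^ 2) := by
        rw [← mul_assoc]
        gcongr with i
        exact ha i

section PairSpace

variable {C N p : ℕ}

def hPart (x : PairSpace C N p) : Matrix (Fin p) (Fin C × Fin N) ℝ :=
  Matrix.of fun j cn => x (Sum.inl (j, cn))

def wPart (x : PairSpace C N p) : Matrix (Fin C) (Fin p) ℝ :=
  Matrix.of fun c j => x (Sum.inr (c, j))

@[simp] lemma emb_apply_inl (H : Matrix (Fin p) (Fin C × Fin N) ℝ) (W : Matrix (Fin C) (Fin p) ℝ)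
    (jcn : Fin p × (Fin C × Fin N)) : emb H W (Sum.inl jcn) = H jcn.1 jcn.2 := rfl

@[simp] lemma emb_apply_inr (H : Matrix (Fin p) (Fin C × Fin N) ℝ) (W : Matrix (Fin C) (Fin p) ℝ)
    (cj : Fin C × Fin p) : emb H W (Sum.inr cj) = W cj.1 cj.2 := rfl

@[simp] lemma hPart_apply (x : PairSpace C N p) (j : Fin p) (cn : Fin C × Fin N) :
    hPart x j cn = x (Sum.inl (j, cn)) := rfl

@[simp] lemma wPart_apply (x : PairSpace C N p) (c : Fin C) (j : Fin p) :
    wPart x c j = x (Sum.inr (c, j)) := rfl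

lemma emb_hPart_wPart (x : PairSpace C N p) : emb (hPart x) (wPart x) = x := by
  ext (⟨j, cn⟩ | ⟨c, j⟩) <;> rfl

lemma hasDerivWithinAt_emb {H : ℝ → Matrix (Fin p) (Fin C × Fin N) ℝ}
    {W : ℝ → Matrix (Fin C) (Fin p) ℝ} {H' : Matrix (Fin p) (Fin C × Fin N) ℝ}
    {W' : Matrix (Fin C) (Fin p) ℝ} {s : Set ℝ} {t : ℝ}
    (hH : HasDerivWithinAt H H' s t) (hW : HasDerivWithinAt W W' s t) :
    HasDerivWithinAt (fun t => emb (H t) (W t)) (emb H' W') s t := by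
  have hcoord : HasDerivWithinAt (fun t (i : PairIdx C N p) =>
      Sum.elim (fun jcn => H t jcn.1 jcn.2) (fun cj => W t cj.1 cj.2) i)
      (fun i => Sum.elim (fun jcn => H' jcn.1 jcn.2) (fun cj => W' cj.1 cj.2) i) s t := by
    refine hasDerivWithinAt_pi.2 fun i => ?_
    rcases i with ⟨j, cn⟩ | ⟨c, j⟩
    · exact hasDerivWithinAt_pi.1 (hasDerivWithinAt_pi.1 hH j) cn
    · exact hasDerivWithinAt_pi.1 (hasDerivWithinAt_pi.1 hW c) j
  exact (PiLp.hasStrictFDerivAt_toLp (𝕜 := ℝ) 2 _).hasFDerivAt.comp_hasDerivWithinAt t hcoord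

lemma inner_emb (H H' : Matrix (Fin p) (Fin C × Fin N) ℝ) (W W' : Matrix (Fin C) (Fin p) ℝ) :
    inner ℝ (emb H W) (emb H' W') =
      ∑ j, ∑ cn, H j cn * H' j cn + ∑ c, ∑ j, W c j * W' c j := by
  simp only [PiLp.inner_apply, Fintype.sum_sum_type, Fintype.sum_prod_type, emb_apply_inl,
    emb_apply_inr, RCLike.inner_apply, conj_trivial, mul_comm]

lemma norm_sq_eq_sum_columns (x : PairSpace C N p) :
    ‖x‖ ^ 2 = ∑ j, (∑ c, ∑ n, x (Sum.inl (j, (c, n))) ^ 2 + ∑ c, x (Sum.inr (c, j)) ^ 2) := by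
  rw [EuclideanSpace.real_norm_sq_eq, Fintype.sum_sum_type, Finset.sum_add_distrib,
    Fintype.sum_prod_type (fun cj : Fin C × Fin p => x (Sum.inr cj) ^ 2), Finset.sum_comm]
  simp only [Fintype.sum_prod_type]

lemma sum_transpose_mul_mul_eq (A : Matrix (Fin C) (Fin C × Fin N) ℝ)
    (H : Matrix (Fin p) (Fin C × Fin N) ℝ) (W : Matrix (Fin C) (Fin p) ℝ) :
    ∑ j, ∑ cn, (Wᵀ * A) j cn * H j cn = ∑ c, ∑ j, (A * Hᵀ) c j * W c j := by
  simp only [Matrix.mul_apply, Matrix.transpose_apply, Finset.sum_mul]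
  calc _ = ∑ j, ∑ c, ∑ cn, W c j * A c cn * H j cn :=
        Finset.sum_congr rfl fun _ _ => Finset.sum_comm
    _ = ∑ c, ∑ j, ∑ cn, W c j * A c cn * H j cn := Finset.sum_comm
    _ = _ := by simp only [mul_comm, mul_left_comm]

def flowField (A : Matrix (Fin C) (Fin C × Fin N) ℝ) : PairSpace C N p →ₗ[ℝ] PairSpace C N p where
  toFun x := emb (-((wPart x)ᵀ * A)) (-(A * (hPart x)ᵀ))
  map_add' x y := by
    ext (⟨j, cn⟩ | ⟨c, j⟩) <;>
      simp [Matrix.mul_apply, add_mul, mul_add, Finset.sum_add_distrib] <;> ring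
  map_smul' r x := by
    ext (⟨j, cn⟩ | ⟨c, j⟩) <;> simp [Matrix.mul_apply, Finset.mul_sum, mul_assoc, mul_left_comm]

lemma flowField_emb (A : Matrix (Fin C) (Fin C × Fin N) ℝ) (H : Matrix (Fin p) (Fin C × Fin N) ℝ)
    (W : Matrix (Fin C) (Fin p) ℝ) : flowField A (emb H W) = emb (-(Wᵀ * A)) (-(A * Hᵀ)) := rfl

lemma inner_flowField (A : Matrix (Fin C) (Fin C × Fin N) ℝ) (x y : PairSpace C N p) :
    inner ℝ (flowField A x) y = -(∑ c, ∑ j, (A * (hPart y)ᵀ) c j * wPart x c j +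
      ∑ c, ∑ j, (A * (hPart x)ᵀ) c j * wPart y c j) := by
  conv_lhs => rw [← emb_hPart_wPart y]
  simp only [flowField, LinearMap.coe_mk, AddHom.coe_mk, inner_emb, Matrix.neg_apply, neg_mul,
    Finset.sum_neg_distrib, sum_transpose_mul_mul_eq]
  ring

lemma inner_flowField_comm (A : Matrix (Fin C) (Fin C × Fin N) ℝ) (x y : PairSpace C N p) :
    inner ℝ (flowField A x) y = inner ℝ x (flowField A y) := by
  rw [real_inner_comm (flowField A y) x, inner_flowField, inner_flowField, add_comm]

def aTilde (N : ℕ) (β : Fin C → ℝ) : Matrix (Fin C) (Fin C × Fin N) ℝ :=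
  Matrix.of fun c cn => β c - if cn.1 = c then 1 else 0

lemma sum_aTilde_apply (β : Fin C → ℝ) (c : Fin C) :
    ∑ cn, aTilde N β c cn = C * N * β c - N := by
  rw [aTilde, Fintype.sum_prod_type, Finset.sum_comm]
  simp
  ring

lemma transpose_mul_aTilde_apply (β : ℝ) (W : Matrix (Fin C) (Fin p) ℝ) (j : Fin p)
    (cn : Fin C × Fin N) :
    (Wᵀ * aTilde N fun _ : Fin C => β) j cn = β * ∑ c, W c j - W cn.1 j := by
  simp [aTilde, Matrix.mul_apply, mul_sub, Finset.sum_sub_distrib, Finset.mul_sum, mul_comm]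

lemma aTilde_mul_transpose_apply (β : ℝ) (H : Matrix (Fin p) (Fin C × Fin N) ℝ) (c : Fin C)
    (j : Fin p) :
    (aTilde N (fun _ : Fin C => β) * Hᵀ) c j = β * ∑ c', ∑ n, H j (c', n) - ∑ n, H j (c, n) := by
  simp only [aTilde, Matrix.mul_apply, Matrix.of_apply, Matrix.transpose_apply,
    Fintype.sum_prod_type]
  simp [sub_mul, Finset.sum_sub_distrib, Finset.mul_sum]

lemma flowField_aTilde_eq_smul_of_mem (hN : 0 < N) (β : ℝ) {u : PairSpace C N p}
    (hu : u ∈ Tsub C N p) : flowField (aTilde N fun _ : Fin C => β) u = √N • u := by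
  obtain ⟨hH, hW⟩ := hu
  ext (⟨j, c, n⟩ | ⟨c, j⟩)
  · simp [flowField, transpose_mul_aTilde_apply, hW j, hH j c n]
    rw [← mul_assoc, mul_inv_cancel₀ (by positivity), one_mul]
  · simp [flowField, aTilde_mul_transpose_apply, hH j, ← Finset.mul_sum, hW j]
    rw [← mul_assoc, ← div_eq_mul_inv, Real.div_sqrt]

def tsubOf (U : Matrix (Fin C) (Fin p) ℝ) : PairSpace C N p :=
  emb (Matrix.of fun j cn => (√N)⁻¹ * U cn.1 j) U

lemma tsubOf_mem {U : Matrix (Fin C) (Fin p) ℝ} (hU : ∀ j, ∑ c, U c j = 0) :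
    tsubOf (N := N) U ∈ Tsub C N p :=
  ⟨fun _ _ _ => rfl, hU⟩

lemma inner_tsubOf (x : PairSpace C N p) (U : Matrix (Fin C) (Fin p) ℝ) :
    inner ℝ x (tsubOf U) =
      ∑ c, ∑ j, ((√N)⁻¹ * ∑ n, x (Sum.inl (j, (c, n))) + x (Sum.inr (c, j))) * U c j := by
  rw [← emb_hPart_wPart x, tsubOf, inner_emb]
  simp [Fintype.sum_prod_type, add_mul, Finset.sum_add_distrib, Finset.sum_mul, Finset.mul_sum]
  rw [Finset.sum_comm]
  simp only [mul_comm, mul_assoc]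

lemma inv_sqrt_mul_sum_add_eq_of_mem_orthogonal {x : PairSpace C N p} (hx : x ∈ (Tsub C N p)ᗮ)
    (j : Fin p) (c₁ c₂ : Fin C) :
    (√N)⁻¹ * ∑ n, x (Sum.inl (j, (c₁, n))) + x (Sum.inr (c₁, j)) =
      (√N)⁻¹ * ∑ n, x (Sum.inl (j, (c₂, n))) + x (Sum.inr (c₂, j)) := by
  set U : Matrix (Fin C) (Fin p) ℝ := Matrix.single c₁ j 1 - Matrix.single c₂ j 1
  have hU : ∀ j', ∑ c, U c j' = 0 := by
    intro j'
    simp [U, Matrix.single_apply, Finset.sum_sub_distrib, ite_and]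
  have h := (Submodule.mem_orthogonal' _ _).1 hx _ (tsubOf_mem hU)
  rw [inner_tsubOf] at h
  simp [U, Matrix.single_apply, mul_sub, Finset.sum_sub_distrib, ite_and] at h
  linarith

lemma inner_flowField_aTilde_le (hN : 0 < N) {σ β : ℝ} (hσ : 0 ≤ σ) (hβ : β * C = 1 - σ)
    {x : PairSpace C N p} (hx : x ∈ (Tsub C N p)ᗮ) :
    inner ℝ (flowField (aTilde N fun _ : Fin C => β) x) x ≤ √N * σ * ‖x‖ ^ 2 := by
  have : Nonempty (Fin N) := ⟨⟨0, hN⟩⟩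
  have hcol : ∀ j, 2 * ∑ c, (∑ n, x (Sum.inl (j, (c, n))) -
        β * ∑ c', ∑ n, x (Sum.inl (j, (c', n)))) * x (Sum.inr (c, j)) ≤
      √N * σ * (∑ c, ∑ n, x (Sum.inl (j, (c, n))) ^ 2 + ∑ c, x (Sum.inr (c, j)) ^ 2) := by
    intro j
    simpa using two_mul_sum_sub_mul_le (h := fun c n => x (Sum.inl (j, (c, n))))
      (w := fun c => x (Sum.inr (c, j)))
      (by simpa using inv_sqrt_mul_sum_add_eq_of_mem_orthogonal hx j) hσ (by simpa using hβ)
  calc inner ℝ (flowField (aTilde N fun _ : Fin C => β) x) x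
      = ∑ j, 2 * ∑ c, (∑ n, x (Sum.inl (j, (c, n))) -
          β * ∑ c', ∑ n, x (Sum.inl (j, (c', n)))) * x (Sum.inr (c, j)) := by
        rw [inner_flowField, Finset.sum_comm]
        simp only [aTilde_mul_transpose_apply, hPart_apply, wPart_apply, Finset.mul_sum]
        rw [← Finset.sum_add_distrib, ← Finset.sum_neg_distrib]
        refine Finset.sum_congr rfl fun j _ => ?_
        rw [← Finset.sum_add_distrib, ← Finset.sum_neg_distrib]
        refine Finset.sum_congr rfl fun c _ => ?_
        ring
    _ ≤ ∑ j, √N * σ * (∑ c, ∑ n, x (Sum.inl (j, (c, n))) ^ 2 + ∑ c, x (Sum.inr (c, j)) ^ 2) :=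
        Finset.sum_le_sum fun j _ => hcol j
    _ = √N * σ * ‖x‖ ^ 2 := by rw [norm_sq_eq_sum_columns, Finset.mul_sum]

lemma eq_of_hasDerivWithinAt_neg_sum_aTilde (hC : 0 < C) {b : ℝ → Fin C → ℝ} (hb0 : b 0 = 0)
    (hb : ∀ t ∈ Ici (0 : ℝ),
      HasDerivWithinAt b (fun c => -∑ cn, aTilde N (b t) c cn) (Ici 0) t) :
    ∀ t ∈ Ici (0 : ℝ), b t = fun _ => (1 - Real.exp (-(C * N : ℝ) * t)) / C := by
  have hf : ∀ t ∈ Ici (0 : ℝ), HasDerivWithinAt (fun t => (C : ℝ) • b t - 1)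
      ((-(C * N : ℝ)) • ((C : ℝ) • b t - 1)) (Ici 0) t := by
    intro t ht
    refine (((hb t ht).const_smul (C : ℝ)).sub_const 1).congr_deriv ?_
    ext c
    simp [sum_aTilde_apply]
    ring
  intro t ht
  ext c
  have hc := congrFun (eq_exp_mul_smul_of_hasDerivWithinAt hf t ht) c
  simp [hb0] at hc
  field_simp
  linarith

lemma mem_orthogonal_of_hasDerivWithinAt_flowField (hN : 0 < N) {β : ℝ → ℝ}
    {v : ℝ → PairSpace C N p}
    (hv : ∀ t ∈ Ici (0 : ℝ),
      HasDerivWithinAt v (flowField (aTilde N fun _ : Fin C => β t) (v t)) (Ici 0) t)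
    (hv0 : v 0 ∈ (Tsub C N p)ᗮ) : ∀ t ∈ Ici (0 : ℝ), v t ∈ (Tsub C N p)ᗮ := by
  intro t ht
  refine (Submodule.mem_orthogonal' _ _).2 fun y hy => ?_
  rw [inner_eq_exp_mul_of_hasDerivWithinAt hv (fun _ x => inner_flowField_comm _ x y)
    (fun t => flowField_aTilde_eq_smul_of_mem hN (β t) hy) t ht,
    (Submodule.mem_orthogonal' _ _).1 hv0 y hy, mul_zero]

lemma norm_le_of_hasDerivWithinAt_flowField (hC : 0 < C) (hN : 0 < N) {v : ℝ → PairSpace C N p}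
    (hv : ∀ t ∈ Ici (0 : ℝ), HasDerivWithinAt v
      (flowField (aTilde N fun _ : Fin C => (1 - Real.exp (-(C * N : ℝ) * t)) / C) (v t)) (Ici 0) t)
    (hvT : ∀ t ∈ Ici (0 : ℝ), v t ∈ (Tsub C N p)ᗮ) :
    ∀ t ∈ Ici (0 : ℝ), ‖v t‖ ≤ Real.exp (1 / (C * √N)) * ‖v 0‖ := by
  set r : ℝ → ℝ := fun t => -(√N * Real.exp (-(C * N : ℝ) * t)) / (C * N)
  have hr : ∀ t, HasDerivAt r (√N * Real.exp (-(C * N : ℝ) * t)) t := by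
    intro t
    refine ((((hasDerivAt_id t).const_mul (-(C * N : ℝ))).exp.const_mul √N).neg.div_const
      (C * N : ℝ)).congr_deriv ?_
    simp only [id]
    field_simp
  have hβ : ∀ t, (1 - Real.exp (-(C * N : ℝ) * t)) / C * C = 1 - Real.exp (-(C * N : ℝ) * t) :=
    fun t => div_mul_cancel₀ _ (by positivity)
  intro t ht
  calc ‖v t‖ ≤ Real.exp (r t - r 0) * ‖v 0‖ :=
        norm_le_exp_sub_mul_of_inner_deriv_le hv hr
          (fun s hs => inner_flowField_aTilde_le hN (Real.exp_pos _).le (hβ s) (hvT s hs)) t ht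
    _ ≤ Real.exp (1 / (C * √N)) * ‖v 0‖ := by
      gcongr
      have : 0 ≤ √N * Real.exp (-(C * N : ℝ) * t) / (C * N) := by positivity
      calc r t - r 0 = √N / (C * N) - √N * Real.exp (-(C * N : ℝ) * t) / (C * N) := by
            simp only [r, mul_zero, Real.exp_zero, mul_one]; ring
        _ ≤ √N / (C * N) := by linarith
        _ = 1 / (C * √N) := by
            rw [div_eq_div_iff (by positivity) (by positivity)]
            linear_combination (C : ℝ) * Real.mul_self_sqrt (Nat.cast_nonneg N)

end PairSpace

theorem initial_growth_general (C N p : ℕ) (hC : 0 < C) (hN : 0 < N)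
    (H₀ : Matrix (Fin p) (Fin C × Fin N) ℝ) (W₀ : Matrix (Fin C) (Fin p) ℝ)
    (H : ℝ → Matrix (Fin p) (Fin C × Fin N) ℝ)
    (W : ℝ → Matrix (Fin C) (Fin p) ℝ)
    (b : ℝ → (Fin C → ℝ))
    (Atil : ℝ → Matrix (Fin C) (Fin C × Fin N) ℝ)
    (hA : ∀ t, Atil t = Matrix.of (fun c (cn : Fin C × Fin N) =>
      b t c - if cn.1 = c then 1 else 0))
    (hH0 : H 0 = H₀) (hW0 : W 0 = W₀) (hb0 : b 0 = 0)
    (hH' : ∀ t ∈ Ici (0 : ℝ), HasDerivWithinAt H (-((W t)ᵀ * Atil t)) (Ici 0) t)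
    (hW' : ∀ t ∈ Ici (0 : ℝ), HasDerivWithinAt W (-(Atil t * (H t)ᵀ)) (Ici 0) t)
    (hb' : ∀ t ∈ Ici (0 : ℝ), HasDerivWithinAt b
      (fun c => -(∑ cn : Fin C × Fin N, Atil t c cn)) (Ici 0) t) :
    ∀ t ∈ Ici (0 : ℝ),
      ‖emb (H t) (W t) - Real.exp (Real.sqrt N * t) •
          (Submodule.orthogonalProjectionOnto (Tsub C N p) (emb H₀ W₀) : PairSpace C N p)‖
        ≤ Real.exp (1 / (C * Real.sqrt N)) *
          ‖emb H₀ W₀ - (Submodule.orthogonalProjectionOnto (Tsub C N p) (emb H₀ W₀) : PairSpace C N p)‖ ∧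
      b t = fun _ => (1 - Real.exp (-(C * N : ℝ) * t)) / C := by
  have hAb : ∀ t, Atil t = aTilde N (b t) := hA
  have hb := eq_of_hasDerivWithinAt_neg_sum_aTilde hC hb0 fun t ht => by
    simpa only [hAb] using hb' t ht
  set u₀ : PairSpace C N p := ↑(Submodule.orthogonalProjectionOnto (Tsub C N p) (emb H₀ W₀))
  set v : ℝ → PairSpace C N p := fun t => emb (H t) (W t) - Real.exp (√N * t) • u₀
  have hv : ∀ t ∈ Ici (0 : ℝ), HasDerivWithinAt v
      (flowField (aTilde N fun _ : Fin C => (1 - Real.exp (-(C * N : ℝ) * t)) / C) (v t))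
      (Ici 0) t := by
    intro t ht
    have hAt : Atil t = aTilde N fun _ : Fin C => (1 - Real.exp (-(C * N : ℝ) * t)) / C := by
      rw [hAb t, hb t ht]
    refine hasDerivWithinAt_sub_exp_smul ?_
      (flowField_aTilde_eq_smul_of_mem hN _ (Submodule.coe_mem _))
    rw [← hAt, flowField_emb]
    exact hasDerivWithinAt_emb (hH' t ht) (hW' t ht)
  have hv0 : v 0 = emb H₀ W₀ - u₀ := by simp [v, hH0, hW0]
  have hvT := mem_orthogonal_of_hasDerivWithinAt_flowField hN hv
    (hv0 ▸ Submodule.sub_starProjection_mem_orthogonal _)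
  intro t ht
  exact ⟨hv0 ▸ norm_le_of_hasDerivWithinAt_flowField hC hN hv hvT t ht, hb t ht⟩

/-- Let `H, W, b` evolve by the modified gradient flow
`H' = -Wᵀ Ã`, `W' = -Ã Hᵀ`, `b' = -Ã 1_{CN}` with `Ã(t) = b(t) 1_{CN}ᵀ - I_C ⊗ 1_Nᵀ`,
`H(0) = H₀`, `W(0) = W₀`, `b(0) = 0`.  Then for all `t ≥ 0`
`‖(H(t),W(t)) - e^{√N t} Π_T(H₀,W₀)‖_E ≤ e^{1/(C√N)} ‖(H₀,W₀) - Π_T(H₀,W₀)‖_E`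
and `b(t) = ((1 - e^{-CNt})/C) 1_C`, where `Π_T` is the orthogonal projection onto `T`. -/
theorem initial_growth (C N p : ℕ) (hC : 0 < C) (hN : 0 < N) (hp : 0 < p)
    (H₀ : Matrix (Fin p) (Fin C × Fin N) ℝ) (W₀ : Matrix (Fin C) (Fin p) ℝ)
    (H : ℝ → Matrix (Fin p) (Fin C × Fin N) ℝ)
    (W : ℝ → Matrix (Fin C) (Fin p) ℝ)
    (b : ℝ → (Fin C → ℝ))
    (Atil : ℝ → Matrix (Fin C) (Fin C × Fin N) ℝ)
    (hA : ∀ t, Atil t = Matrix.of (fun c (cn : Fin C × Fin N) =>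
      b t c - if cn.1 = c then 1 else 0))
    (hH0 : H 0 = H₀) (hW0 : W 0 = W₀) (hb0 : b 0 = 0)
    (hH' : ∀ t ∈ Ici (0 : ℝ), HasDerivWithinAt H (-((W t)ᵀ * Atil t)) (Ici 0) t)
    (hW' : ∀ t ∈ Ici (0 : ℝ), HasDerivWithinAt W (-(Atil t * (H t)ᵀ)) (Ici 0) t)
    (hb' : ∀ t ∈ Ici (0 : ℝ), HasDerivWithinAt b
      (fun c => -(∑ cn : Fin C × Fin N, Atil t c cn)) (Ici 0) t) :
    ∀ t ∈ Ici (0 : ℝ),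
      ‖emb (H t) (W t) - Real.exp (Real.sqrt N * t) •
          (Submodule.orthogonalProjectionOnto (Tsub C N p) (emb H₀ W₀) : PairSpace C N p)‖
        ≤ Real.exp (1 / (C * Real.sqrt N)) *
          ‖emb H₀ W₀ - (Submodule.orthogonalProjectionOnto (Tsub C N p) (emb H₀ W₀) : PairSpace C N p)‖ ∧
      b t = fun _ => (1 - Real.exp (-(C * N : ℝ) * t)) / C :=
  initial_growth_general C N p hC hN H₀ W₀ H W b Atil hA hH0 hW0 hb0 hH' hW' hb'

end
end

section
/- Fix a sign ε ∈ {+1, −1} and t ≥ 0. If (H, W) ∈ ℝ^{p×CN} ⊕ ℝ^{C×p} satisfies H = ε·(1/√N)·(W ⊗ 1_N)^⊤ and 1_C^⊤ W = 0, then L_t(H, W) := (W^⊤ M_t, M_t H^⊤) = ε√N·(H, W); i.e., the subspace E₁^ε is an eigenspace of L_t with eigenvalue ε√N. -/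
/-!
Write `A := I_C ⊗ 1_Nᵀ` and `J` for the all-ones matrix, so `M_t = A - β(t) J` and
`H = (ε/√N) Wᵀ A`. Since the columns of `W` sum to zero, `Wᵀ J = 0` and `J Aᵀ W = N J W = 0`,
so `β(t)` drops out of both components; what remains is `Wᵀ A = (ε√N) H` (as `ε² = 1`) and
`A Aᵀ W = N W`.
-/

open Matrix

noncomputable section

/-- `β(t) = (1 - e^{-CNt})/C`. -/
def beta (C N : ℕ) (t : ℝ) : ℝ := (1 - Real.exp (-(C * N : ℝ) * t)) / C

/-- `M_t = (I_C ⊗ 1_Nᵀ) - β(t) 1_C 1_{CN}ᵀ ∈ ℝ^{C×CN}`, with the `CN` columns indexed by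
`Fin C × Fin N`. -/
def Mt (C N : ℕ) (t : ℝ) : Matrix (Fin C) (Fin C × Fin N) ℝ :=
  Matrix.of fun c cn => (if cn.1 = c then 1 else 0) - beta C N t

namespace Matrix

variable {R : Type*} [CommRing R] {l m n k : Type*} [Fintype m]

/-- `I_m ⊗ 1_nᵀ`, with columns indexed by `m × n`. -/
def blockOnes (m n : Type*) (R : Type*) [DecidableEq m] [Zero R] [One R] :
    Matrix m (m × n) R :=
  of fun c cn => if cn.1 = c then 1 else 0

def allOnes (m n : Type*) (R : Type*) [One R] : Matrix m n R :=
  of fun _ _ => 1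

theorem allOnes_mul_of_sum_eq_zero {B : Matrix m k R} (hB : ∀ j, ∑ c, B c j = 0) :
    allOnes l m R * B = 0 := by
  ext i j
  simp [allOnes, mul_apply, hB]

theorem transpose_mul_allOnes_of_sum_eq_zero {B : Matrix m k R} (hB : ∀ j, ∑ c, B c j = 0) :
    Bᵀ * allOnes m l R = 0 := by
  rw [← transpose_transpose (allOnes m l R), ← transpose_mul]
  exact transpose_eq_zero.mpr (allOnes_mul_of_sum_eq_zero hB)

variable [DecidableEq m]

theorem mul_blockOnes (B : Matrix k m R) :
    B * blockOnes m n R = of fun i cn => B i cn.1 := by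
  ext i cn
  simp [blockOnes, mul_apply]

variable [Fintype n]

theorem blockOnes_mul_transpose_blockOnes :
    blockOnes m n R * (blockOnes m n R)ᵀ = (Fintype.card n : R) • (1 : Matrix m m R) := by
  ext c d
  simp only [blockOnes, transpose_apply, of_apply, mul_apply, mul_ite, mul_one, mul_zero,
    Fintype.sum_prod_type, one_apply, smul_apply, smul_eq_mul]
  simp [eq_comm]

theorem allOnes_mul_transpose_blockOnes :
    allOnes l (m × n) R * (blockOnes m n R)ᵀ = (Fintype.card n : R) • allOnes l m R := by
  ext i c
  simp only [blockOnes, allOnes, transpose_apply, of_apply, mul_apply, one_mul,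
    Fintype.sum_prod_type, smul_apply, smul_eq_mul, mul_one]
  rw [Finset.sum_comm]
  simp

end Matrix

theorem Mt_eq_blockOnes_sub (C N : ℕ) (t : ℝ) :
    Mt C N t = blockOnes (Fin C) (Fin N) ℝ - beta C N t • allOnes (Fin C) (Fin C × Fin N) ℝ := by
  ext c cn
  simp [Mt, blockOnes, allOnes]

theorem E1_eigenspace_general (C N p : ℕ) (hN : 0 < N)
    (ε : ℝ) (hε : ε = 1 ∨ ε = -1) (t : ℝ)
    (H : Matrix (Fin p) (Fin C × Fin N) ℝ) (W : Matrix (Fin C) (Fin p) ℝ)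
    (hH : H = Matrix.of (fun j (cn : Fin C × Fin N) => ε * ((Real.sqrt N)⁻¹ * W cn.1 j)))
    (hW : ∀ j : Fin p, ∑ c : Fin C, W c j = 0) :
    Wᵀ * Mt C N t = (ε * Real.sqrt N) • H ∧
    Mt C N t * Hᵀ = (ε * Real.sqrt N) • W := by
  have hH' : H = (ε * (Real.sqrt N)⁻¹) • (Wᵀ * blockOnes (Fin C) (Fin N) ℝ) := by
    rw [hH, mul_blockOnes]
    ext j cn
    simp [mul_assoc]
  have hscalar : (ε * Real.sqrt N) * (ε * (Real.sqrt N)⁻¹) = 1 := by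
    have hsqrt : Real.sqrt N ≠ 0 := by positivity
    rcases hε with rfl | rfl <;> field_simp
  rw [Mt_eq_blockOnes_sub]
  set A := blockOnes (Fin C) (Fin N) ℝ
  set J := allOnes (Fin C) (Fin C × Fin N) ℝ
  constructor
  · rw [hH', Matrix.mul_sub, Matrix.mul_smul, transpose_mul_allOnes_of_sum_eq_zero hW, smul_zero,
      sub_zero, smul_smul, hscalar, one_smul]
  · have hMA : (A - beta C N t • J) * Aᵀ * W = (N : ℝ) • W := by
      rw [Matrix.sub_mul, Matrix.smul_mul, blockOnes_mul_transpose_blockOnes,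
        allOnes_mul_transpose_blockOnes, Matrix.sub_mul, Matrix.smul_mul, Matrix.smul_mul,
        Matrix.smul_mul, allOnes_mul_of_sum_eq_zero hW, Matrix.one_mul, Fintype.card_fin,
        smul_zero, smul_zero, sub_zero]
    rw [hH', transpose_smul, transpose_mul, transpose_transpose, Matrix.mul_smul,
      ← Matrix.mul_assoc, hMA, smul_smul, mul_assoc, ← div_eq_inv_mul, Real.div_sqrt]

/-- Fix a sign `ε ∈ {+1, -1}` and `t ≥ 0`.  If
`H = ε (1/√N) (W ⊗ 1_N)ᵀ` and `1_Cᵀ W = 0`, then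
`L_t(H, W) = (Wᵀ M_t, M_t Hᵀ) = ε √N (H, W)`; i.e. `E₁^ε` is an eigenspace of `L_t`
with eigenvalue `ε √N`. -/
theorem E1_eigenspace (C N p : ℕ) (hC : 0 < C) (hN : 0 < N) (hp : 0 < p)
    (ε : ℝ) (hε : ε = 1 ∨ ε = -1) (t : ℝ) (ht : 0 ≤ t)
    (H : Matrix (Fin p) (Fin C × Fin N) ℝ) (W : Matrix (Fin C) (Fin p) ℝ)
    (hH : H = Matrix.of (fun j (cn : Fin C × Fin N) => ε * ((Real.sqrt N)⁻¹ * W cn.1 j)))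
    (hW : ∀ j : Fin p, ∑ c : Fin C, W c j = 0) :
    Wᵀ * Mt C N t = (ε * Real.sqrt N) • H ∧
    Mt C N t * Hᵀ = (ε * Real.sqrt N) • W :=
  E1_eigenspace_general C N p hN ε hε t H W hH hW

end
end

section
/- Fix a sign ε ∈ {+1, −1}, t ≥ 0, and z ∈ ℝ^p. If H = ε·z·1_{CN}^⊤ and W = √N·1_C·z^⊤, then L_t(H, W) := (W^⊤ M_t, M_t H^⊤) = ε√N·(1 − C·β(t))·(H, W); i.e., the subspace E₂^ε is an eigenspace of L_t with eigenvalue ε√N·(1 − C·β(t)). -/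
open Matrix
noncomputable section
/-- Fix a sign `ε ∈ {+1, -1}`, `t ≥ 0`, and `z ∈ ℝ^p`.  If
`H = ε z 1_{CN}ᵀ` and `W = √N 1_C zᵀ`, then
`L_t(H, W) = (Wᵀ M_t, M_t Hᵀ) = ε √N (1 - C β(t)) (H, W)`; i.e. `E₂^ε` is an
eigenspace of `L_t` with eigenvalue `ε √N (1 - C β(t))`. -/
theorem E2_eigenspace (C N p : ℕ) (hC : 0 < C) (hN : 0 < N) (hp : 0 < p)
    (ε : ℝ) (hε : ε = 1 ∨ ε = -1) (t : ℝ) (ht : 0 ≤ t) (z : Fin p → ℝ)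
    (H : Matrix (Fin p) (Fin C × Fin N) ℝ) (W : Matrix (Fin C) (Fin p) ℝ)
    (hH : H = Matrix.of (fun j (_ : Fin C × Fin N) => ε * z j))
    (hW : W = Matrix.of (fun _ j => Real.sqrt N * z j)) :
    Wᵀ * Mt C N t = (ε * Real.sqrt N * (1 - C * beta C N t)) • H ∧
    Mt C N t * Hᵀ = (ε * Real.sqrt N * (1 - C * beta C N t)) • W := by
  subst hH hW
  have hε2 : ε * ε = 1 := by rcases hε with h | h <;> simp [h]
  have hNN : Real.sqrt N * Real.sqrt N = (N : ℝ) :=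
    Real.mul_self_sqrt (Nat.cast_nonneg N)
  constructor
  · ext j cn
    simp only [Matrix.mul_apply, Matrix.transpose_apply, Matrix.of_apply, Mt,
      Matrix.smul_apply, smul_eq_mul, mul_sub, Finset.sum_sub_distrib,
      Finset.sum_const, Finset.card_univ, Fintype.card_fin, nsmul_eq_mul,
      mul_ite, mul_one, mul_zero, Finset.sum_ite_eq, Finset.mem_univ, if_true]
    have hsq : ε ^ 2 = 1 := by rw [sq, hε2]
    ring_nf
    simp [hsq]
    ring
  · ext c j
    simp only [Matrix.mul_apply, Matrix.transpose_apply, Matrix.of_apply, Mt,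
      Matrix.smul_apply, smul_eq_mul, sub_mul, Finset.sum_sub_distrib,
      Fintype.sum_prod_type, Finset.sum_const, Finset.card_univ, Fintype.card_fin,
      nsmul_eq_mul, ite_mul, one_mul, zero_mul, Finset.sum_ite_eq, Finset.mem_univ, if_true]
    rw [show ε * Real.sqrt N * (1 - ↑C * beta C N t) * (Real.sqrt N * z j)
        = (Real.sqrt N * Real.sqrt N) * (ε * (1 - ↑C * beta C N t) * z j) by ring, hNN]
    have hrow : ∀ x : Fin C, (∑ _x1 : Fin N, if x = c then ε * z j else 0)
        = if x = c then (N : ℝ) * (ε * z j) else 0 := by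
      intro x; split <;> simp [Finset.sum_const, mul_comm]
    rw [Finset.sum_congr rfl fun x _ => hrow x, Finset.sum_ite_eq']
    simp [Fintype.card_prod]
    ring

end
end

section
/- Let W : [0,∞) → ℝ^{C×p} be differentiable with W(0) = W₀ and W'(t) = √N·W(t) − W(t)W(t)^⊤W(t) for all t ≥ 0. Let Π denote the orthogonal projection of ℝ^C onto ker(W₀^⊤). Then W(t)W(t)^⊤ → √N·(I_C − Π) as t → ∞. -/
open Matrix Set Filter Topology

attribute [local instance] Matrix.normedAddCommGroup Matrix.normedSpace

/-!
Writing `a = √N` and `G = W Wᵀ`, the flow gives the matrix Riccati equation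
`G' = 2a G - 2 G²`. Its solution is explicit: with `u(t) = exp (-2at)`, the defect
`R = G (a u + (1 - u) G₀) - a G₀` solves the linear equation `R' = -2 G R` with `R(0) = 0`,
so Grönwall forces `R = 0`. Diagonalising `G₀ = U diag(d) Uᵀ` (with `d ≥ 0`) turns this into
`G(t) = U diag(a dᵢ / (a u + (1 - u) dᵢ)) Uᵀ`, whose entries tend to `a` on the nonzero
eigenvalues and stay `0` on the zero ones. The limit is therefore `a` times the orthogonal
projection onto the range of `G₀`, which is `I - Π` because `ker G₀ = ker W₀ᵀ`.
-/

theorem eq_zero_of_norm_deriv_le_mul_norm {E : Type*} [NormedAddCommGroup E] [NormedSpace ℝ E]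
    {f f' : ℝ → E} {k : ℝ → ℝ} {a : ℝ} (hk : ContinuousOn k (Ici a))
    (hf : ∀ t ∈ Ici a, HasDerivWithinAt f (f' t) (Ici a) t) (ha : f a = 0)
    (bound : ∀ t ∈ Ici a, ‖f' t‖ ≤ k t * ‖f t‖) : ∀ t ∈ Ici a, f t = 0 := by
  intro T hT
  obtain ⟨K, hK⟩ := (isCompact_Icc (a := a) (b := T)).exists_bound_of_continuousOn
    (hk.mono Icc_subset_Ici_self)
  refine eq_zero_of_abs_deriv_le_mul_abs_self_of_eq_zero_right (K := K)
    (fun t ht => (hf t ht.1).continuousWithinAt.mono Icc_subset_Ici_self)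
    (fun t ht => (hf t ht.1).mono (Ici_subset_Ici.2 ht.1)) ha (fun t ht => ?_) T ⟨hT, le_rfl⟩
  calc ‖f' t‖ ≤ k t * ‖f t‖ := bound t ht.1
    _ ≤ K * ‖f t‖ := by
      gcongr
      exact (le_abs_self _).trans (hK t (Ico_subset_Icc_self ht))

theorem IsSelfAdjoint.eq_of_mul_eq_of_mul_eq {R : Type*} [Mul R] [StarMul R] {p q : R}
    (hp : IsSelfAdjoint p) (hq : IsSelfAdjoint q) (hpq : p * q = q) (hqp : q * p = p) : p = q := by
  rw [← hqp, ← hq.star_eq, ← hp.star_eq, ← star_mul, hpq, hq.star_eq]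

theorem tendsto_mul_div_mul_add_one_sub_mul {ι : Type*} {l : Filter ι} {u : ι → ℝ}
    (hu : Tendsto u l (𝓝 0)) (a x : ℝ) :
    Tendsto (fun i => a * x / (a * u i + (1 - u i) * x)) l (𝓝 (a * x / x)) := by
  rcases eq_or_ne x 0 with rfl | hx
  · simpa using tendsto_const_nhds
  have hden : Tendsto (fun i => a * u i + (1 - u i) * x) l (𝓝 x) := by
    simpa using (hu.const_mul a).add ((hu.const_sub 1).mul_const x)
  exact tendsto_const_nhds.div hden hx

section MatrixCalculus

variable {m n o : Type*}

theorem Matrix.norm_mul_le_card_mul [Fintype m] [Fintype n] [Fintype o]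
    (A : Matrix m n ℝ) (B : Matrix n o ℝ) :
    ‖A * B‖ ≤ Fintype.card n * ‖A‖ * ‖B‖ := by
  refine (Matrix.norm_le_iff (by positivity)).2 fun i j => ?_
  calc ‖(A * B) i j‖ = ‖∑ k, A i k * B k j‖ := rfl
    _ ≤ ∑ k, ‖A i k * B k j‖ := norm_sum_le _ _
    _ ≤ ∑ _k : n, ‖A‖ * ‖B‖ := Finset.sum_le_sum fun k _ => by
        rw [norm_mul]
        exact mul_le_mul (norm_entry_le_entrywise_sup_norm A)
          (norm_entry_le_entrywise_sup_norm B) (norm_nonneg _) (norm_nonneg _)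
    _ = Fintype.card n * ‖A‖ * ‖B‖ := by
        rw [Finset.sum_const, nsmul_eq_mul, Finset.card_univ, mul_assoc]

variable {s : Set ℝ} {t : ℝ}

theorem Matrix.hasDerivWithinAt_iff [Fintype n] {f : ℝ → Matrix m n ℝ} {f' : Matrix m n ℝ} :
    HasDerivWithinAt f f' s t ↔ ∀ i j, HasDerivWithinAt (fun τ => f τ i j) (f' i j) s t :=
  hasDerivWithinAt_pi.trans (forall_congr' fun _ => hasDerivWithinAt_pi)

theorem HasDerivWithinAt.matrix_mul [Fintype n] [Fintype o]
    {f : ℝ → Matrix m n ℝ} {g : ℝ → Matrix n o ℝ} {f' : Matrix m n ℝ} {g' : Matrix n o ℝ}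
    (hf : HasDerivWithinAt f f' s t) (hg : HasDerivWithinAt g g' s t) :
    HasDerivWithinAt (fun τ => f τ * g τ) (f' * g t + f t * g') s t := by
  rw [Matrix.hasDerivWithinAt_iff] at hf hg ⊢
  intro i j
  simp only [Matrix.add_apply, Matrix.mul_apply, ← Finset.sum_add_distrib]
  exact HasDerivWithinAt.fun_sum fun k _ => (hf i k).mul (hg k j)

theorem HasDerivWithinAt.matrix_transpose [Fintype m] [Fintype n]
    {f : ℝ → Matrix m n ℝ} {f' : Matrix m n ℝ} (hf : HasDerivWithinAt f f' s t) :
    HasDerivWithinAt (fun τ => (f τ)ᵀ) f'ᵀ s t := by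
  rw [Matrix.hasDerivWithinAt_iff] at hf ⊢
  exact fun i j => hf j i

theorem HasDerivWithinAt.riccati_mul_transpose_self [Fintype m] [Fintype n]
    {W : ℝ → Matrix m n ℝ} {a : ℝ}
    (hW : HasDerivWithinAt W (a • W t - W t * (W t)ᵀ * W t) s t) :
    HasDerivWithinAt (fun τ => W τ * (W τ)ᵀ)
      ((2 * a) • (W t * (W t)ᵀ) - (2 : ℝ) • (W t * (W t)ᵀ * (W t * (W t)ᵀ))) s t := by
  convert hW.matrix_mul hW.matrix_transpose using 1
  simp only [transpose_sub, transpose_smul, transpose_mul, transpose_transpose,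
    Matrix.sub_mul, Matrix.mul_sub, Matrix.smul_mul, Matrix.mul_smul, Matrix.mul_assoc]
  module

end MatrixCalculus

theorem riccati_mul_eq {n : Type*} [Fintype n] [DecidableEq n] {a : ℝ}
    {G : ℝ → Matrix n n ℝ}
    (hG : ∀ t ∈ Ici (0 : ℝ),
      HasDerivWithinAt G ((2 * a) • G t - (2 : ℝ) • (G t * G t)) (Ici 0) t) :
    ∀ t ∈ Ici (0 : ℝ), G t * ((a * Real.exp (-(2 * a * t))) • 1
      + (1 - Real.exp (-(2 * a * t))) • G 0) = a • G 0 := by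
  set u : ℝ → ℝ := fun t => Real.exp (-(2 * a * t))
  set Q : ℝ → Matrix n n ℝ := fun t => (a * u t) • 1 + (1 - u t) • G 0
  have hu : ∀ t, HasDerivAt u (-(2 * a) * u t) t := fun t => by
    simpa [u, mul_comm] using ((hasDerivAt_id t).const_mul (-(2 * a))).exp
  have hQ : ∀ t, HasDerivAt Q ((-(2 * a) * u t) • (a • 1 - G 0)) t := fun t => by
    refine ((((hu t).const_mul a).smul_const (1 : Matrix n n ℝ)).add
      (((hu t).const_sub 1).smul_const (G 0))).congr_deriv ?_
    module
  have hR : ∀ t ∈ Ici (0 : ℝ), HasDerivWithinAt (fun t => G t * Q t - a • G 0)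
      ((-2 : ℝ) • (G t * (G t * Q t - a • G 0))) (Ici 0) t := fun t ht => by
    refine (((hG t ht).matrix_mul (hQ t).hasDerivWithinAt).sub_const (a • G 0)).congr_deriv ?_
    simp only [Q, Matrix.sub_mul, Matrix.mul_sub, Matrix.mul_add,
      Matrix.smul_mul, Matrix.mul_smul, Matrix.mul_one, Matrix.mul_assoc]
    module
  have hGcont : ContinuousOn G (Ici 0) := fun t ht => (hG t ht).continuousWithinAt
  have hR0 := eq_zero_of_norm_deriv_le_mul_norm (k := fun t => 2 * Fintype.card n * ‖G t‖)
    (by fun_prop) hR (by simp [Q, u]) fun t _ => by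
      have := Matrix.norm_mul_le_card_mul (G t) (G t * Q t - a • G 0)
      rw [norm_smul, norm_neg, Real.norm_two]
      linarith
  exact fun t ht => sub_eq_zero.1 (hR0 t ht)

namespace Matrix.IsHermitian

variable {n : Type*} [Fintype n] [DecidableEq n] {A : Matrix n n ℝ}

noncomputable def spectralAlgHom (hA : A.IsHermitian) : (n → ℝ) →ₐ[ℝ] Matrix n n ℝ :=
  (Unitary.conjStarAlgAut ℝ _ hA.eigenvectorUnitary).toAlgEquiv.toAlgHom.comp (diagonalAlgHom ℝ)

theorem spectralAlgHom_eigenvalues (hA : A.IsHermitian) :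
    hA.spectralAlgHom hA.eigenvalues = A := by
  conv_rhs => rw [hA.spectral_theorem]
  rfl

theorem continuous_spectralAlgHom (hA : A.IsHermitian) : Continuous hA.spectralAlgHom :=
  hA.spectralAlgHom.toLinearMap.continuous_of_finiteDimensional

theorem transpose_spectralAlgHom (hA : A.IsHermitian) (x : n → ℝ) :
    (hA.spectralAlgHom x)ᵀ = hA.spectralAlgHom x := by
  rw [← conjTranspose_eq_transpose_of_trivial, ← star_eq_conjTranspose]
  show star (Unitary.conjStarAlgAut ℝ _ hA.eigenvectorUnitary (diagonal x)) = _
  rw [← map_star, star_eq_conjTranspose, diagonal_conjTranspose, star_trivial]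
  rfl

theorem eq_spectralAlgHom_div_of_mul_eq (hA : A.IsHermitian) {X : Matrix n n ℝ} {p q : n → ℝ}
    (hq : ∀ i, q i ≠ 0) (h : X * hA.spectralAlgHom q = hA.spectralAlgHom p) :
    X = hA.spectralAlgHom (p / q) := by
  have hinv : hA.spectralAlgHom q * hA.spectralAlgHom q⁻¹ = 1 := by
    rw [← map_mul, ← map_one hA.spectralAlgHom]
    congr 1
    funext i
    exact mul_inv_cancel₀ (hq i)
  calc X = X * hA.spectralAlgHom q * hA.spectralAlgHom q⁻¹ := by
        rw [Matrix.mul_assoc, hinv, Matrix.mul_one]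
    _ = hA.spectralAlgHom (p / q) := by rw [h, ← map_mul, div_eq_mul_inv]

/-- `eigenvalues / eigenvalues` is the indicator of the nonzero eigenvalues (`0 / 0 = 0`), so
`spectralAlgHom` of it is the orthogonal projection onto the range of `W * Wᵀ`. -/
theorem eq_one_sub_spectralAlgHom_div_self {m : Type*} [Fintype m] {W : Matrix n m ℝ}
    (hA : (W * Wᵀ).IsHermitian) {P : Matrix n n ℝ} (hP : Pᵀ = P)
    (hrange : ∀ v, Wᵀ *ᵥ (P *ᵥ v) = 0) (hker : ∀ v, Wᵀ *ᵥ v = 0 → P *ᵥ v = v) :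
    P = 1 - hA.spectralAlgHom (hA.eigenvalues / hA.eigenvalues) := by
  set d := hA.eigenvalues
  set M := hA.spectralAlgHom (d / d)
  have hWW : ∀ B : Matrix n n ℝ, W * Wᵀ * B = 0 ↔ Wᵀ * B = 0 := fun B => by
    simpa only [conjTranspose_eq_transpose_of_trivial] using
      self_mul_conjTranspose_mul_eq_zero W B
  have hd : hA.spectralAlgHom d = W * Wᵀ := hA.spectralAlgHom_eigenvalues
  have hAM : hA.spectralAlgHom d * M = hA.spectralAlgHom d := by
    rw [← map_mul]
    congr 1
    funext i
    simp only [Pi.mul_apply, Pi.div_apply, mul_div, mul_self_div_self]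
  have hMA : M = hA.spectralAlgHom d⁻¹ * hA.spectralAlgHom d := by
    rw [← map_mul, ← div_eq_inv_mul]
  rw [hd] at hAM hMA
  have hP_one_sub : P * (1 - M) = 1 - M := by
    have h : Wᵀ * (1 - M) = 0 :=
      (hWW _).1 (by rw [Matrix.mul_sub, hAM, Matrix.mul_one, sub_self])
    refine ext_iff_mulVec.2 fun v => ?_
    rw [← mulVec_mulVec]
    exact hker _ (by rw [mulVec_mulVec, h, zero_mulVec])
  have hone_sub_P : (1 - M) * P = P := by
    have h : Wᵀ * P = 0 := ext_iff_mulVec.2 fun v => by rw [← mulVec_mulVec, hrange, zero_mulVec]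
    rw [Matrix.sub_mul, hMA, Matrix.mul_assoc, (hWW P).2 h, Matrix.mul_zero, Matrix.one_mul,
      sub_zero]
  have hsa : ∀ B : Matrix n n ℝ, Bᵀ = B → IsSelfAdjoint B := fun B hB => by
    rw [IsSelfAdjoint, star_eq_conjTranspose, conjTranspose_eq_transpose_of_trivial, hB]
  refine (hsa P hP).eq_of_mul_eq_of_mul_eq (hsa _ ?_) hP_one_sub hone_sub_P
  rw [transpose_sub, transpose_one, hA.transpose_spectralAlgHom]

end Matrix.IsHermitian

theorem Matrix.PosSemidef.tendsto_of_mul_eq_smul {n ι : Type*} [Fintype n] [DecidableEq n]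
    {A : Matrix n n ℝ} (hA : A.PosSemidef) {a : ℝ} (ha : 0 < a) {l : Filter ι} {u : ι → ℝ}
    (hu : Tendsto u l (𝓝[>] 0)) {X : ι → Matrix n n ℝ}
    (hX : ∀ᶠ i in l, X i * ((a * u i) • 1 + (1 - u i) • A) = a • A) :
    Tendsto X l (𝓝 (a • hA.isHermitian.spectralAlgHom
      (hA.isHermitian.eigenvalues / hA.isHermitian.eigenvalues))) := by
  set d := hA.isHermitian.eigenvalues
  have hlim : Tendsto (fun i => (a • d) / ((a * u i) • 1 + (1 - u i) • d)) l
      (𝓝 ((a • d) / d)) :=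
    tendsto_pi_nhds.2 fun j => by
      simpa using tendsto_mul_div_mul_add_one_sub_mul (hu.mono_right nhdsWithin_le_nhds) a (d j)
  rw [← map_smul, ← smul_div_assoc]
  refine ((hA.isHermitian.continuous_spectralAlgHom.tendsto _).comp hlim).congr' ?_
  filter_upwards [hX, hu (Ioo_mem_nhdsGT one_pos)] with i hXi hui
  refine (hA.isHermitian.eq_spectralAlgHom_div_of_mul_eq (fun j => ?_) ?_).symm
  · have hq : 0 < a * u i + (1 - u i) * d j := add_pos_of_pos_of_nonneg (mul_pos ha hui.1)
      (mul_nonneg (sub_nonneg.2 hui.2.le) (hA.eigenvalues_nonneg j))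
    simpa using hq.ne'
  · have hd : hA.isHermitian.spectralAlgHom d = A :=
      hA.isHermitian.spectralAlgHom_eigenvalues
    simpa [map_add, map_smul, hd] using hXi

theorem gram_limit_general (C N p : ℕ) (hN : 0 < N)
    (W₀ : Matrix (Fin C) (Fin p) ℝ)
    (W : ℝ → Matrix (Fin C) (Fin p) ℝ)
    (hW0 : W 0 = W₀)
    (hW' : ∀ t ∈ Ici (0 : ℝ), HasDerivWithinAt W
      (Real.sqrt N • W t - W t * (W t)ᵀ * W t) (Ici 0) t)
    (Pi : Matrix (Fin C) (Fin C) ℝ)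
    (hPi_symm : Piᵀ = Pi)
    (hPi_range : ∀ v : Fin C → ℝ, W₀ᵀ *ᵥ (Pi *ᵥ v) = 0)
    (hPi_ker : ∀ v : Fin C → ℝ, W₀ᵀ *ᵥ v = 0 → Pi *ᵥ v = v) :
    Tendsto (fun t => W t * (W t)ᵀ) atTop
      (𝓝 (Real.sqrt N • ((1 : Matrix (Fin C) (Fin C) ℝ) - Pi))) := by
  have ha : 0 < Real.sqrt N := Real.sqrt_pos.2 (by exact_mod_cast hN)
  have hA : (W₀ * W₀ᵀ).PosSemidef := by
    simpa only [conjTranspose_eq_transpose_of_trivial] using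
      posSemidef_self_mul_conjTranspose W₀
  have hclosed := riccati_mul_eq fun t ht => (hW' t ht).riccati_mul_transpose_self
  rw [hW0] at hclosed
  have hu : Tendsto (fun t => Real.exp (-(2 * Real.sqrt N * t))) atTop (𝓝[>] 0) :=
    Real.tendsto_exp_atBot_nhdsGT.comp
      (tendsto_neg_atTop_atBot.comp (tendsto_id.const_mul_atTop (by positivity)))
  rw [hA.isHermitian.eq_one_sub_spectralAlgHom_div_self hPi_symm hPi_range hPi_ker,
    sub_sub_cancel]
  exact hA.tendsto_of_mul_eq_smul ha hu ((eventually_ge_atTop 0).mono hclosed)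

/-- **Statement 17.** Let `W : [0,∞) → ℝ^{C×p}` be differentiable with `W(0) = W₀` and
`W'(t) = √N W(t) - W(t) W(t)ᵀ W(t)` for all `t ≥ 0`.  Let `Π` be the matrix of the
orthogonal projection of `ℝ^C` onto `ker(W₀ᵀ) = {v : W₀ᵀ v = 0}` with respect to the
standard inner product (i.e. `Π` is symmetric, idempotent, its range lies in `ker(W₀ᵀ)`,
and it fixes `ker(W₀ᵀ)` pointwise).  Then `W(t) W(t)ᵀ → √N (I_C - Π)` as `t → ∞`. -/
theorem gram_limit (C N p : ℕ) (hC : 0 < C) (hN : 0 < N) (hp : 0 < p)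
    (W₀ : Matrix (Fin C) (Fin p) ℝ)
    (W : ℝ → Matrix (Fin C) (Fin p) ℝ)
    (hW0 : W 0 = W₀)
    (hW' : ∀ t ∈ Ici (0 : ℝ), HasDerivWithinAt W
      (Real.sqrt N • W t - W t * (W t)ᵀ * W t) (Ici 0) t)
    (Pi : Matrix (Fin C) (Fin C) ℝ)
    (hPi_symm : Piᵀ = Pi)
    (hPi_idem : Pi * Pi = Pi)
    (hPi_range : ∀ v : Fin C → ℝ, W₀ᵀ *ᵥ (Pi *ᵥ v) = 0)
    (hPi_ker : ∀ v : Fin C → ℝ, W₀ᵀ *ᵥ v = 0 → Pi *ᵥ v = v) :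
    Tendsto (fun t => W t * (W t)ᵀ) atTop
      (𝓝 (Real.sqrt N • ((1 : Matrix (Fin C) (Fin C) ℝ) - Pi))) :=
  gram_limit_general C N p hN W₀ W hW0 hW' Pi hPi_symm hPi_range hPi_ker
end

section
/- Let (H₀, W₀, b₀) ∈ S with rank(W₀) ≥ C − 1, and let Z(t) = (H(t), W(t), b(t)) solve the gradient flow Z'(t) = −∇R_e(Z(t)) with Z(0) = (H₀, W₀, b₀). Then the limit lim_{t→∞} Z(t) exists and exhibits strong neural collapse: its limit (H∞, W∞, b∞) satisfies W∞W∞^⊤ = √N·(I_C − (1/C)·1_C 1_C^⊤), H∞ = (1/√N)·(W∞ ⊗ 1_N)^⊤, and b∞ = (1/C)·1_C. -/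
open Matrix Set Filter Topology

attribute [local instance] Matrix.normedAddCommGroup Matrix.normedSpace

noncomputable section

/-- Membership in the subspace
`S = {(H, W, b) : H = (1/√N)(W ⊗ 1_N)ᵀ, 1_Cᵀ W = 0, b ∈ span{1_C}}`;
the `CN` columns are indexed by `Fin C × Fin N`. -/
def memS (C N p : ℕ) (H : Matrix (Fin p) (Fin C × Fin N) ℝ)
    (W : Matrix (Fin C) (Fin p) ℝ) (b : Fin C → ℝ) : Prop :=
  H = Matrix.of (fun j (cn : Fin C × Fin N) => (Real.sqrt N)⁻¹ * W cn.1 j) ∧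
  (∀ j : Fin p, ∑ c : Fin C, W c j = 0) ∧
  (∃ β : ℝ, b = fun _ => β)

/-- `A = W H + b 1_{CN}ᵀ - I_C ⊗ 1_Nᵀ`. -/
def Amat (C N p : ℕ) (H : Matrix (Fin p) (Fin C × Fin N) ℝ)
    (W : Matrix (Fin C) (Fin p) ℝ) (b : Fin C → ℝ) : Matrix (Fin C) (Fin C × Fin N) ℝ :=
  W * H + Matrix.of (fun c (_ : Fin C × Fin N) => b c)
    - Matrix.of (fun c (cn : Fin C × Fin N) => if cn.1 = c then (1 : ℝ) else 0)

/-!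
Write `W₀ = U B` with `U` orthogonal and `B Bᵀ = diag λ` (spectral decomposition of `W₀ W₀ᵀ`).
On `S` the gradient flow reduces to `W' = √N W - W Wᵀ W`, `H = (1/√N)(W ⊗ 1_N)ᵀ`, `b = β 1_C`
with `β' = N - N C β`, and the ansatz `W(t) = U diag(f(t)) B` solves it as soon as every `f_i`
solves the scalar Bernoulli equation `f' = √N f - λ_i f³`, which is explicitly solvable.
By uniqueness for the (smooth) gradient flow this ansatz is the solution. As `t → ∞`,
`f_i² λ_i → √N` whenever `λ_i ≠ 0`, so `W Wᵀ` tends to `√N` times the orthogonal projection onto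
the range of `W₀ W₀ᵀ`; since `1_Cᵀ W₀ = 0` and `rank W₀ ≥ C - 1`, that range is exactly `1_C^⊥`.
-/

section Scalar

def expRelax (k l y₀ t : ℝ) : ℝ := l + (y₀ - l) * Real.exp (-(k * t))

lemma expRelax_zero (k l y₀ : ℝ) : expRelax k l y₀ 0 = y₀ := by simp [expRelax]

lemma hasDerivAt_expRelax (k l y₀ t : ℝ) :
    HasDerivAt (expRelax k l y₀) (k * (l - expRelax k l y₀ t)) t := by
  have h : HasDerivAt (fun t => -(k * t)) (-k) t := by
    simpa using ((hasDerivAt_id t).const_mul k).fun_neg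
  exact ((h.exp.const_mul (y₀ - l)).const_add l).congr_deriv (by simp only [expRelax]; ring)

lemma tendsto_expRelax {k : ℝ} (hk : 0 < k) (l y₀ : ℝ) :
    Tendsto (expRelax k l y₀) atTop (𝓝 l) := by
  have h : Tendsto (fun t => -(k * t)) atTop atBot :=
    tendsto_neg_atTop_atBot.comp (tendsto_id.const_mul_atTop hk)
  have := ((Real.tendsto_exp_atBot.comp h).const_mul (y₀ - l)).const_add l
  rwa [mul_zero, add_zero] at this

lemma expRelax_pos {k l y₀ t : ℝ} (hk : 0 ≤ k) (ht : 0 ≤ t) (hl : 0 ≤ l) (h₀ : 0 < y₀) :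
    0 < expRelax k l y₀ t := by
  have he : Real.exp (-(k * t)) ≤ 1 := Real.exp_le_one_iff.2 (by nlinarith)
  have he' := Real.exp_pos (-(k * t))
  simp only [expRelax]
  nlinarith

/-- `bernoulliSol a lam t ^ (-2)` solves the linear equation `u' = 2 (lam - a u)`, `u 0 = 1`. -/
def bernoulliSol (a lam t : ℝ) : ℝ := (√(expRelax (2 * a) (lam / a) 1 t))⁻¹

lemma bernoulliSol_zero (a lam : ℝ) : bernoulliSol a lam 0 = 1 := by
  simp [bernoulliSol, expRelax_zero]

lemma hasDerivAt_bernoulliSol {a lam t : ℝ} (ha : 0 < a) (hlam : 0 ≤ lam) (ht : 0 ≤ t) :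
    HasDerivAt (bernoulliSol a lam)
      (a * bernoulliSol a lam t - lam * bernoulliSol a lam t ^ 3) t := by
  have hu : 0 < expRelax (2 * a) (lam / a) 1 t :=
    expRelax_pos (by positivity) ht (by positivity) one_pos
  refine (((hasDerivAt_expRelax _ _ _ t).sqrt hu.ne').inv
    (Real.sqrt_pos.2 hu).ne').congr_deriv ?_
  simp only [bernoulliSol]
  generalize expRelax (2 * a) (lam / a) 1 t = u at hu ⊢
  have hsq := Real.sq_sqrt hu.le
  field_simp
  rw [hsq]
  ring

lemma tendsto_bernoulliSol {a lam : ℝ} (ha : 0 < a) (hlam : 0 < lam) :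
    Tendsto (bernoulliSol a lam) atTop (𝓝 (√(lam / a))⁻¹) :=
  ((Real.continuous_sqrt.tendsto _).comp (tendsto_expRelax (by positivity) _ _)).inv₀
    (Real.sqrt_pos.2 (by positivity)).ne'

lemma inv_sqrt_div_sq_mul {a l : ℝ} (ha : 0 < a) (hl : 0 ≤ l) :
    (√(l / a))⁻¹ ^ 2 * l = if l = 0 then 0 else a := by
  split_ifs with h
  · rw [h, mul_zero]
  · rw [inv_pow, Real.sq_sqrt (by positivity)]
    field_simp

variable {C : ℕ}

/-- Set to `0` where `lam i = 0`, since `bernoulliSol a 0` grows like `exp (a t)`; in the flow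
these coefficients only multiply zero rows of `B`. -/
def flowCoeff (a : ℝ) (lam : Fin C → ℝ) (t : ℝ) (i : Fin C) : ℝ :=
  if lam i = 0 then 0 else bernoulliSol a (lam i) t

lemma flowCoeff_zero (a : ℝ) (lam : Fin C → ℝ) :
    flowCoeff a lam 0 = fun i => if lam i = 0 then 0 else 1 := by
  funext i
  simp [flowCoeff, bernoulliSol_zero]

lemma hasDerivAt_flowCoeff {a t : ℝ} {lam : Fin C → ℝ} (ha : 0 < a) (hlam : ∀ i, 0 ≤ lam i)
    (ht : 0 ≤ t) :
    HasDerivAt (flowCoeff a lam)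
      (fun i => a * flowCoeff a lam t i - lam i * flowCoeff a lam t i ^ 3) t := by
  refine hasDerivAt_pi.2 fun i => ?_
  by_cases hi : lam i = 0
  · simpa [flowCoeff, hi] using hasDerivAt_const t (0 : ℝ)
  · simpa [flowCoeff, hi] using hasDerivAt_bernoulliSol ha (hlam i) ht

lemma tendsto_flowCoeff {a : ℝ} {lam : Fin C → ℝ} (ha : 0 < a) (hlam : ∀ i, 0 ≤ lam i) :
    Tendsto (flowCoeff a lam) atTop (𝓝 fun i => (√(lam i / a))⁻¹) := by
  refine tendsto_pi_nhds.2 fun i => ?_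
  by_cases hi : lam i = 0
  · simp [flowCoeff, hi]
  · simpa [flowCoeff, hi] using tendsto_bernoulliSol ha ((hlam i).lt_of_ne' hi)

end Scalar

theorem ContDiff.eqOn_Ici_of_hasDerivWithinAt {E : Type*} [NormedAddCommGroup E]
    [NormedSpace ℝ E] [ProperSpace E] {F : E → E} (hF : ContDiff ℝ 1 F) {f g : ℝ → E} {a : ℝ}
    (hf : ∀ t ∈ Ici a, HasDerivWithinAt f (F (f t)) (Ici a) t)
    (hg : ∀ t ∈ Ici a, HasDerivWithinAt g (F (g t)) (Ici a) t) (ha : f a = g a) :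
    EqOn f g (Ici a) := by
  intro t ht
  have hcont : ∀ φ : ℝ → E, (∀ t ∈ Ici a, HasDerivWithinAt φ (F (φ t)) (Ici a) t) →
      ContinuousOn φ (Icc a t) := fun φ hφ u hu =>
    (hφ u hu.1).continuousWithinAt.mono Icc_subset_Ici_self
  have hbound : ∀ φ : ℝ → E, (∀ t ∈ Ici a, HasDerivWithinAt φ (F (φ t)) (Ici a) t) →
      ∃ R, ∀ u ∈ Ico a t, φ u ∈ Metric.closedBall 0 R := fun φ hφ =>
    (isCompact_Icc.exists_bound_of_continuousOn (hcont φ hφ)).imp fun R hR u hu =>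
      mem_closedBall_zero_iff.2 (hR u (Ico_subset_Icc_self hu))
  have hderiv : ∀ φ : ℝ → E, (∀ t ∈ Ici a, HasDerivWithinAt φ (F (φ t)) (Ici a) t) →
      ∀ u ∈ Ico a t, HasDerivWithinAt φ (F (φ u)) (Ici u) u := fun φ hφ u hu =>
    (hφ u hu.1).mono (Ici_subset_Ici.2 hu.1)
  obtain ⟨Rf, hRf⟩ := hbound f hf
  obtain ⟨Rg, hRg⟩ := hbound g hg
  obtain ⟨K, hK⟩ := hF.contDiffOn.exists_lipschitzOnWith one_ne_zero
    (convex_closedBall 0 (max Rf Rg)) (isCompact_closedBall 0 (max Rf Rg))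
  exact ODE_solution_unique_of_mem_Icc_right (v := fun _ => F) (fun _ _ => hK)
    (hcont f hf) (hderiv f hf)
    (fun u hu => Metric.closedBall_subset_closedBall (le_max_left _ _) (hRf u hu))
    (hcont g hg) (hderiv g hg)
    (fun u hu => Metric.closedBall_subset_closedBall (le_max_right _ _) (hRg u hu))
    ha ⟨ht, le_rfl⟩

abbrev FlowState (C N p : ℕ) :=
  Matrix (Fin p) (Fin C × Fin N) ℝ × Matrix (Fin C) (Fin p) ℝ × (Fin C → ℝ)

def negGradRe (C N p : ℕ) (z : FlowState C N p) : FlowState C N p :=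
  (-(z.2.1ᵀ * Amat C N p z.1 z.2.1 z.2.2), -(Amat C N p z.1 z.2.1 z.2.2 * z.1ᵀ),
    fun c => -∑ cn, Amat C N p z.1 z.2.1 z.2.2 c cn)

lemma contDiff_negGradRe (C N p : ℕ) : ContDiff ℝ 1 (negGradRe C N p) := by
  refine .prodMk (contDiff_pi.2 fun j => contDiff_pi.2 fun cn => ?_)
    (.prodMk (contDiff_pi.2 fun c => contDiff_pi.2 fun j => ?_) (contDiff_pi.2 fun c => ?_)) <;>
  simp only [Amat, Matrix.neg_apply, Matrix.mul_apply, Matrix.sub_apply, Matrix.add_apply,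
    Matrix.of_apply, Matrix.transpose_apply] <;>
  fun_prop

section Collapsed

variable {C N p : ℕ}

variable (C N) in
/-- `I_C ⊗ 1_Nᵀ`. -/
def labelMatrix : Matrix (Fin C) (Fin C × Fin N) ℝ :=
  of fun c cn => if cn.1 = c then 1 else 0

variable (N) in
/-- `(1/√N) (W ⊗ 1_N)ᵀ` -/
def liftH (W : Matrix (Fin C) (Fin p) ℝ) : Matrix (Fin p) (Fin C × Fin N) ℝ :=
  of fun j cn => (√N)⁻¹ * W cn.1 j

lemma labelMatrix_mul_transpose : labelMatrix C N * (labelMatrix C N)ᵀ = (N : ℝ) • 1 := by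
  ext c d
  simp [labelMatrix, Matrix.mul_apply, Fintype.sum_prod_type, Matrix.one_apply]
  split_ifs <;> simp_all [eq_comm]

lemma liftH_eq (W : Matrix (Fin C) (Fin p) ℝ) :
    liftH N W = (√N)⁻¹ • (Wᵀ * labelMatrix C N) := by
  ext j cn
  simp [liftH, labelMatrix, Matrix.mul_apply]

lemma sum_mul_labelMatrix_apply (M : Matrix (Fin C) (Fin C) ℝ) (c : Fin C) :
    ∑ cn, (M * labelMatrix C N) c cn = N * ∑ d, M c d := by
  simp [labelMatrix, Matrix.mul_apply, Fintype.sum_prod_type, Finset.mul_sum]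

lemma Amat_liftH (W : Matrix (Fin C) (Fin p) ℝ) (β : ℝ) :
    Amat C N p (liftH N W) W (fun _ => β) =
      ((√N)⁻¹ • (W * Wᵀ) + β • of (fun _ _ => 1) - 1) * labelMatrix C N := by
  ext c cn
  simp [Amat, liftH, labelMatrix, Matrix.mul_apply, Matrix.one_apply, Finset.mul_sum, eq_comm,
    mul_left_comm]

lemma negGradRe_liftH (hN : 0 < N) {W : Matrix (Fin C) (Fin p) ℝ}
    (hW : (of fun _ _ => 1 : Matrix (Fin C) (Fin C) ℝ) * W = 0) (β : ℝ) :
    negGradRe C N p (liftH N W, W, fun _ => β) =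
      (liftH N (√N • W - W * Wᵀ * W), √N • W - W * Wᵀ * W, fun _ => N - N * C * β) := by
  have hs : √N * √N = N := Real.mul_self_sqrt (Nat.cast_nonneg N)
  have hs0 : √(N : ℝ) ≠ 0 := by positivity
  have hWJ : Wᵀ * (of fun _ _ => 1 : Matrix (Fin C) (Fin C) ℝ) = 0 := by
    rw [← transpose_eq_zero, transpose_mul, transpose_transpose, ← hW]
    rfl
  have hWWJ : ∀ c, ∑ d, (W * Wᵀ) c d = 0 := fun c => by
    have h : W * Wᵀ * (of fun _ _ => 1 : Matrix (Fin C) (Fin C) ℝ) = 0 := by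
      rw [Matrix.mul_assoc, hWJ, Matrix.mul_zero]
    simpa [Matrix.mul_apply (M := W * Wᵀ)] using congr_fun (congr_fun h c) c
  rw [negGradRe, Amat_liftH]
  simp only [liftH_eq]
  refine Prod.ext ?_ (Prod.ext ?_ ?_)
  · simp only [← Matrix.mul_assoc, Matrix.mul_sub, Matrix.mul_add, Matrix.mul_smul,
      Matrix.mul_one, hWJ, smul_zero, add_zero, transpose_sub, transpose_smul, transpose_mul,
      transpose_transpose, Matrix.sub_mul, Matrix.smul_mul, smul_sub, smul_smul,
      inv_mul_cancel₀ hs0, one_smul]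
    abel
  · rw [transpose_smul, transpose_mul, transpose_transpose, Matrix.mul_smul,
      Matrix.mul_assoc, ← Matrix.mul_assoc (labelMatrix C N), labelMatrix_mul_transpose]
    simp only [Matrix.sub_mul, Matrix.add_mul, Matrix.smul_mul, Matrix.mul_smul, Matrix.one_mul, hW,
      smul_zero, add_zero, smul_sub, smul_smul, Matrix.mul_assoc]
    have h1 : (√N)⁻¹ * (N * (√N)⁻¹) = (1 : ℝ) := by field_simp; linarith
    have h2 : (√N)⁻¹ * N = √(N : ℝ) := by field_simp; linarith
    rw [h1, h2, one_smul, neg_sub]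
  · funext c
    simp only [sum_mul_labelMatrix_apply, Matrix.add_apply, Matrix.sub_apply, Matrix.smul_apply,
      Finset.sum_add_distrib, Finset.sum_sub_distrib, ← Finset.smul_sum, hWWJ]
    simp [Matrix.one_apply]
    ring

lemma ones_mul_eq_zero {W : Matrix (Fin C) (Fin p) ℝ} (hW : ∀ j, ∑ c, W c j = 0) :
    (of fun _ _ => 1 : Matrix (Fin C) (Fin C) ℝ) * W = 0 := by
  ext c j
  simpa [Matrix.mul_apply] using hW j

end Collapsed

section Ansatz

variable {C N p : ℕ} (U : Matrix (Fin C) (Fin C) ℝ) (B : Matrix (Fin C) (Fin p) ℝ) {lam : Fin C → ℝ}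

lemma diagonal_ansatz_mul_transpose (hB : B * Bᵀ = diagonal lam) (f : Fin C → ℝ) :
    U * diagonal f * B * (U * diagonal f * B)ᵀ =
      U * diagonal (fun i => f i ^ 2 * lam i) * Uᵀ := by
  rw [transpose_mul, transpose_mul, diagonal_transpose]
  calc U * diagonal f * B * (Bᵀ * (diagonal f * Uᵀ))
      = U * (diagonal f * (B * Bᵀ) * diagonal f) * Uᵀ := by simp only [Matrix.mul_assoc]
    _ = U * diagonal (fun i => f i ^ 2 * lam i) * Uᵀ := by
      rw [hB, diagonal_mul_diagonal, diagonal_mul_diagonal]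
      congr 3
      funext i
      ring

lemma diagonal_ansatz_cube (hU : Uᵀ * U = 1) (hB : B * Bᵀ = diagonal lam) (f : Fin C → ℝ) :
    U * diagonal f * B * (U * diagonal f * B)ᵀ * (U * diagonal f * B) =
      U * diagonal (fun i => lam i * f i ^ 3) * B := by
  rw [diagonal_ansatz_mul_transpose U B hB]
  simp only [Matrix.mul_assoc]
  rw [← Matrix.mul_assoc Uᵀ, hU, Matrix.one_mul, ← Matrix.mul_assoc (diagonal _),
    diagonal_mul_diagonal]
  congr 3
  funext i
  ring

lemma ones_mul_diagonal_ansatz {f : Fin C → ℝ} (hf : ∀ i, (∑ c, U c i) * f i = 0) :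
    (of fun _ _ => 1 : Matrix (Fin C) (Fin C) ℝ) * (U * diagonal f * B) = 0 := by
  have h : (of fun _ _ => 1 : Matrix (Fin C) (Fin C) ℝ) * U * diagonal f = 0 := by
    ext c i
    rw [Matrix.mul_diagonal]
    simpa [Matrix.mul_apply] using hf i
  rw [← Matrix.mul_assoc, ← Matrix.mul_assoc, h, Matrix.zero_mul]

variable (N) in
def collapsedState : (Fin C → ℝ) × ℝ →ₗ[ℝ] FlowState C N p where
  toFun x := (liftH N (U * diagonal x.1 * B), U * diagonal x.1 * B, fun _ => x.2)
  map_add' x y := by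
    have h : U * diagonal (x + y).1 * B = U * diagonal x.1 * B + U * diagonal y.1 * B := by
      rw [← Matrix.add_mul, ← Matrix.mul_add, diagonal_add]
      rfl
    simp only [h, liftH_eq, transpose_add, Matrix.add_mul, smul_add, Prod.mk_add_mk]
    rfl
  map_smul' r x := by
    have h : U * diagonal (r • x).1 * B = r • (U * diagonal x.1 * B) := by
      rw [Prod.smul_fst, diagonal_smul, Matrix.mul_smul, Matrix.smul_mul]
    simp only [h, liftH_eq, transpose_smul, Matrix.smul_mul, smul_comm r, RingHom.id_apply,
      Prod.smul_mk]
    rfl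

lemma negGradRe_collapsedState (hN : 0 < N) (hU : Uᵀ * U = 1) (hB : B * Bᵀ = diagonal lam)
    {f : Fin C → ℝ} (hf : ∀ i, (∑ c, U c i) * f i = 0) (β : ℝ) :
    negGradRe C N p (collapsedState N U B (f, β)) =
      collapsedState N U B (fun i => √N * f i - lam i * f i ^ 3, N - N * C * β) := by
  have hV : √N • (U * diagonal f * B) -
      U * diagonal f * B * (U * diagonal f * B)ᵀ * (U * diagonal f * B) =
        U * diagonal (fun i => √N * f i - lam i * f i ^ 3) * B := by
    rw [diagonal_ansatz_cube U B hU hB, ← Matrix.smul_mul, ← Matrix.mul_smul, ← Matrix.sub_mul,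
      ← Matrix.mul_sub, ← diagonal_smul, ← diagonal_sub]
    rfl
  simp only [collapsedState, LinearMap.coe_mk, AddHom.coe_mk]
  rw [negGradRe_liftH hN (ones_mul_diagonal_ansatz U B hf), hV]

end Ansatz

lemma exists_orthogonal_diagonalize_gram {m n : Type*} [Fintype m] [DecidableEq m] [Fintype n]
    (W : Matrix m n ℝ) :
    ∃ (U : Matrix m m ℝ) (lam : m → ℝ),
      Uᵀ * U = 1 ∧ U * Uᵀ = 1 ∧ Uᵀ * W * (Uᵀ * W)ᵀ = diagonal lam := by
  have hherm : (W * Wᵀ).IsHermitian := by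
    simpa using isHermitian_mul_conjTranspose_self W
  have hstar : star (hherm.eigenvectorUnitary : Matrix m m ℝ) =
      (hherm.eigenvectorUnitary : Matrix m m ℝ)ᵀ := by
    simp [star_eq_conjTranspose]
  refine ⟨hherm.eigenvectorUnitary, hherm.eigenvalues, ?_, ?_, ?_⟩
  · rw [← hstar]; exact Unitary.coe_star_mul_self _
  · rw [← hstar]; exact Unitary.coe_mul_star_self _
  · have h := hherm.conjStarAlgAut_star_eigenvectorUnitary
    rw [Unitary.conjStarAlgAut_star_apply, hstar] at h
    rw [transpose_mul, transpose_transpose, Matrix.mul_assoc, ← Matrix.mul_assoc W,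
      ← Matrix.mul_assoc, h]
    rfl

section Spectral

variable {C p : ℕ} {U : Matrix (Fin C) (Fin C) ℝ} {B : Matrix (Fin C) (Fin p) ℝ} {lam : Fin C → ℝ}

lemma eq_sum_sq_of_mul_transpose_eq_diagonal (hB : B * Bᵀ = diagonal lam) (i : Fin C) :
    lam i = ∑ j, B i j ^ 2 := by
  simpa [Matrix.mul_apply, sq] using (congr_fun (congr_fun hB i) i).symm

lemma nonneg_of_mul_transpose_eq_diagonal (hB : B * Bᵀ = diagonal lam) (i : Fin C) :
    0 ≤ lam i := by
  rw [eq_sum_sq_of_mul_transpose_eq_diagonal hB i]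
  positivity

lemma diagonal_support_mul (hB : B * Bᵀ = diagonal lam) :
    diagonal (fun i => if lam i = 0 then 0 else (1 : ℝ)) * B = B := by
  ext i j
  rw [diagonal_mul]
  split_ifs with hi
  · rw [eq_sum_sq_of_mul_transpose_eq_diagonal hB i,
      Finset.sum_eq_zero_iff_of_nonneg fun _ _ => sq_nonneg _] at hi
    rw [zero_mul, eq_comm]
    exact (pow_eq_zero_iff two_ne_zero).1 (hi j (Finset.mem_univ j))
  · rw [one_mul]

lemma sum_col_mul_eq_zero (hB : B * Bᵀ = diagonal lam)
    (hW : (of fun _ _ => 1 : Matrix (Fin C) (Fin C) ℝ) * (U * B) = 0) (i : Fin C) :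
    (∑ c, U c i) * lam i = 0 := by
  have h : (of fun _ _ => 1 : Matrix (Fin C) (Fin C) ℝ) * U * diagonal lam = 0 := by
    rw [← hB, ← Matrix.mul_assoc, Matrix.mul_assoc _ U, hW, Matrix.zero_mul]
  have hii := congr_fun (congr_fun h i) i
  rw [Matrix.mul_diagonal] at hii
  simpa only [Matrix.mul_apply, of_apply, one_mul, Matrix.zero_apply] using hii

lemma card_zero_le_one_of_rank (hB : B * Bᵀ = diagonal lam) (hrank : C - 1 ≤ B.rank) :
    (Finset.univ.filter fun i => lam i = 0).card ≤ 1 := by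
  classical
  rw [← rank_self_mul_transpose, hB, rank_diagonal, Fintype.card_subtype] at hrank
  have := Finset.card_filter_add_card_filter_not (s := Finset.univ) fun i => lam i = 0
  simp only [Finset.card_univ, Fintype.card_fin] at this
  simp only [ne_eq] at hrank
  omega

lemma exists_unique_zero_of_rank (hC : 0 < C) (hU : U * Uᵀ = 1) (hB : B * Bᵀ = diagonal lam)
    (hw : ∀ i, (∑ c, U c i) * lam i = 0) (hrank : C - 1 ≤ B.rank) :
    ∃ i₀, (∀ i, lam i = 0 ↔ i = i₀) ∧ ∀ c, U c i₀ * ∑ d, U d i₀ = 1 := by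
  have hUw : ∀ c, ∑ i, U c i * ∑ d, U d i = 1 := fun c => by
    have h := congr_arg (fun M => ∑ d, M c d) hU
    simp only [Matrix.mul_apply, transpose_apply, one_apply, Finset.sum_ite_eq,
      Finset.mem_univ, if_true] at h
    rw [← h, Finset.sum_comm]
    simp [Finset.mul_sum]
  obtain ⟨i₀, hi₀⟩ : ∃ i₀, ∑ d, U d i₀ ≠ 0 := by
    by_contra! h
    simpa [h] using hUw ⟨0, hC⟩
  have hzero : ∀ i, lam i = 0 ↔ i = i₀ := by
    have hlam₀ : lam i₀ = 0 := (mul_eq_zero.1 (hw i₀)).resolve_left hi₀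
    refine fun i => ⟨fun hi => Finset.card_le_one.1 (card_zero_le_one_of_rank hB hrank) i
      (by simpa using hi) i₀ (by simpa using hlam₀), fun h => h ▸ hlam₀⟩
  refine ⟨i₀, hzero, fun c => ?_⟩
  refine (Finset.sum_eq_single i₀ (fun i _ hi => ?_) (by simp)).symm.trans (hUw c)
  rw [(mul_eq_zero.1 (hw i)).resolve_right (mt (hzero i).1 hi), mul_zero]

lemma mul_diagonal_support_mul_transpose (hU : U * Uᵀ = 1) {i₀ : Fin C}
    (hzero : ∀ i, lam i = 0 ↔ i = i₀) (hcol : ∀ c, U c i₀ * ∑ d, U d i₀ = 1) (a : ℝ) :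
    U * diagonal (fun i => if lam i = 0 then 0 else a) * Uᵀ =
      a • (1 - (C : ℝ)⁻¹ • of fun _ _ => 1) := by
  set w := ∑ d, U d i₀
  have hww : w * w = C := by
    simpa [← Finset.sum_mul] using Finset.sum_congr rfl fun c (_ : c ∈ Finset.univ) => hcol c
  have hprod : ∀ c d, U c i₀ * U d i₀ = (C : ℝ)⁻¹ := fun c d => by
    rw [eq_inv_of_mul_eq_one_left (hcol c), eq_inv_of_mul_eq_one_left (hcol d), ← mul_inv, hww]
  ext c d
  have hdelta : ∑ i, U c i * U d i = (1 : Matrix (Fin C) (Fin C) ℝ) c d := by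
    simp [← hU, Matrix.mul_apply]
  have hterm : ∀ i, U c i * (if lam i = 0 then 0 else a) * U d i =
      a * (U c i * U d i) - if i = i₀ then a * (U c i₀ * U d i₀) else 0 := fun i => by
    by_cases hi : i = i₀
    · simp [hi, (hzero i₀).2 rfl]
    · simp [hi, mt (hzero i).1 hi]
      ring
  rw [Matrix.mul_apply]
  simp only [mul_diagonal, transpose_apply, hterm, Finset.sum_sub_distrib,
    ← Finset.mul_sum, hdelta, Finset.sum_ite_eq', Finset.mem_univ, if_true, hprod,
    Matrix.smul_apply, Matrix.sub_apply, of_apply, smul_eq_mul]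
  ring

end Spectral

theorem exists_collapsing_flow {C N p : ℕ} (hC : 0 < C) (hN : 0 < N)
    {W₀ : Matrix (Fin C) (Fin p) ℝ} (hW₀ : ∀ j, ∑ c, W₀ c j = 0) (hrank : C - 1 ≤ W₀.rank)
    (β₀ : ℝ) :
    ∃ z : ℝ → FlowState C N p, z 0 = (liftH N W₀, W₀, fun _ => β₀) ∧
      (∀ t ∈ Ici (0 : ℝ), HasDerivAt z (negGradRe C N p (z t)) t) ∧
      ∃ Wlim, Tendsto z atTop (𝓝 (liftH N Wlim, Wlim, fun _ => (C : ℝ)⁻¹)) ∧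
        Wlim * Wlimᵀ = √N • (1 - (C : ℝ)⁻¹ • of fun _ _ => 1) := by
  obtain ⟨U, lam, hUU, hUU', hB⟩ := exists_orthogonal_diagonalize_gram W₀
  set B := Uᵀ * W₀
  have hW₀B : W₀ = U * B := by rw [← Matrix.mul_assoc, hUU', Matrix.one_mul]
  have hlam := nonneg_of_mul_transpose_eq_diagonal hB
  have hw := sum_col_mul_eq_zero hB (hW₀B ▸ ones_mul_eq_zero hW₀)
  have hrankB : C - 1 ≤ B.rank := by
    rwa [hW₀B, rank_mul_eq_right_of_isUnit_det _ _ (isUnit_det_of_right_inverse hUU')] at hrank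
  obtain ⟨i₀, hzero, hcol⟩ := exists_unique_zero_of_rank hC hUU' hB hw hrankB
  have hsupp : ∀ t i, (∑ c, U c i) * flowCoeff √N lam t i = 0 := fun t i => by
    by_cases hi : lam i = 0
    · simp [flowCoeff, hi]
    · rw [(mul_eq_zero.1 (hw i)).resolve_right hi, zero_mul]
  have hN' : (0 : ℝ) < √N := by positivity
  have hC' : (C : ℝ) ≠ 0 := by positivity
  refine ⟨fun t => collapsedState N U B (flowCoeff √N lam t, expRelax (N * C) (C : ℝ)⁻¹ β₀ t),
    ?_, fun t ht => ?_, U * diagonal (fun i => (√(lam i / √N))⁻¹) * B, ?_, ?_⟩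
  · simp [collapsedState, flowCoeff_zero, expRelax_zero, Matrix.mul_assoc,
      diagonal_support_mul hB, ← hW₀B]
  · rw [negGradRe_collapsedState U B hN hUU hB (hsupp t)]
    refine ((collapsedState N U B).toContinuousLinearMap.hasFDerivAt.comp_hasDerivAt t
      ((hasDerivAt_flowCoeff hN' hlam ht).prodMk (hasDerivAt_expRelax _ _ _ t))).congr_deriv
      (congr_arg (collapsedState N U B) (Prod.ext rfl ?_))
    change (N * C : ℝ) * ((C : ℝ)⁻¹ - _) = _
    rw [mul_sub, mul_assoc, mul_inv_cancel₀ hC', mul_one]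
  · have h := ((collapsedState N U B).toContinuousLinearMap.continuous.tendsto _).comp
      ((tendsto_flowCoeff hN' hlam).prodMk_nhds
        (tendsto_expRelax (k := N * C) (by positivity) (C : ℝ)⁻¹ β₀))
    rwa [LinearMap.coe_toContinuousLinearMap'] at h
  · rw [diagonal_ansatz_mul_transpose U B hB]
    simp only [inv_sqrt_div_sq_mul hN' (hlam _)]
    exact mul_diagonal_support_mul_transpose hUU' hzero hcol _

theorem gradient_flow_limit_snc_general (C N p : ℕ) (hC : 0 < C) (hN : 0 < N)
    (H₀ : Matrix (Fin p) (Fin C × Fin N) ℝ) (W₀ : Matrix (Fin C) (Fin p) ℝ)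
    (b₀ : Fin C → ℝ)
    (hS0 : memS C N p H₀ W₀ b₀)
    (hrank : C - 1 ≤ W₀.rank)
    (H : ℝ → Matrix (Fin p) (Fin C × Fin N) ℝ)
    (W : ℝ → Matrix (Fin C) (Fin p) ℝ)
    (b : ℝ → (Fin C → ℝ))
    (hH0 : H 0 = H₀) (hW0 : W 0 = W₀) (hb0 : b 0 = b₀)
    (hH' : ∀ t ∈ Ici (0 : ℝ), HasDerivWithinAt H
      (-((W t)ᵀ * Amat C N p (H t) (W t) (b t))) (Ici 0) t)
    (hW' : ∀ t ∈ Ici (0 : ℝ), HasDerivWithinAt W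
      (-(Amat C N p (H t) (W t) (b t) * (H t)ᵀ)) (Ici 0) t)
    (hb' : ∀ t ∈ Ici (0 : ℝ), HasDerivWithinAt b
      (fun c => -(∑ cn : Fin C × Fin N, Amat C N p (H t) (W t) (b t) c cn)) (Ici 0) t) :
    ∃ (Hlim : Matrix (Fin p) (Fin C × Fin N) ℝ) (Wlim : Matrix (Fin C) (Fin p) ℝ)
      (blim : Fin C → ℝ),
      Tendsto H atTop (𝓝 Hlim) ∧ Tendsto W atTop (𝓝 Wlim) ∧ Tendsto b atTop (𝓝 blim) ∧
      Wlim * Wlimᵀ = Real.sqrt N •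
        ((1 : Matrix (Fin C) (Fin C) ℝ) - (C : ℝ)⁻¹ • Matrix.of (fun _ _ => (1 : ℝ))) ∧
      Hlim = Matrix.of (fun j (cn : Fin C × Fin N) => (Real.sqrt N)⁻¹ * Wlim cn.1 j) ∧
      blim = fun _ => (C : ℝ)⁻¹ := by
  obtain ⟨hH₀, hW₀, β₀, rfl⟩ := hS0
  obtain ⟨z, hz0, hz', Wlim, hlim, hgram⟩ := exists_collapsing_flow hC hN hW₀ hrank β₀
  have hsol : EqOn (fun t => (H t, W t, b t)) z (Ici 0) :=
    (contDiff_negGradRe C N p).eqOn_Ici_of_hasDerivWithinAt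
      (fun t ht => (hH' t ht).prodMk ((hW' t ht).prodMk (hb' t ht)))
      (fun t ht => (hz' t ht).hasDerivWithinAt) (by rw [hz0, hH0, hW0, hb0, hH₀]; rfl)
  have hflow : Tendsto (fun t => (H t, W t, b t)) atTop
      (𝓝 (liftH N Wlim, Wlim, fun _ => (C : ℝ)⁻¹)) :=
    hlim.congr' (eventuallyEq_of_mem (Ici_mem_atTop 0) hsol).symm
  exact ⟨_, Wlim, _, hflow.fst_nhds, hflow.snd_nhds.fst_nhds, hflow.snd_nhds.snd_nhds, hgram,
    rfl, rfl⟩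

/-- **Statement 18.** Let `(H₀, W₀, b₀) ∈ S` with `rank W₀ ≥ C - 1` and let
`Z(t) = (H(t), W(t), b(t))` solve the gradient flow `Z' = -∇R_e(Z)` (where
`∇R_e = (Wᵀ A, A Hᵀ, A 1_{CN})` with `A = W H + b 1_{CN}ᵀ - I_C ⊗ 1_Nᵀ`) with
`Z(0) = (H₀, W₀, b₀)`.  Then `lim_{t→∞} Z(t)` exists and exhibits strong neural
collapse: the limit `(H∞, W∞, b∞)` satisfies `W∞ W∞ᵀ = √N (I_C - (1/C) 1_C 1_Cᵀ)`,
`H∞ = (1/√N)(W∞ ⊗ 1_N)ᵀ`, and `b∞ = (1/C) 1_C`. -/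
theorem gradient_flow_limit_snc (C N p : ℕ) (hC : 0 < C) (hN : 0 < N) (hp : 0 < p)
    (H₀ : Matrix (Fin p) (Fin C × Fin N) ℝ) (W₀ : Matrix (Fin C) (Fin p) ℝ)
    (b₀ : Fin C → ℝ)
    (hS0 : memS C N p H₀ W₀ b₀)
    (hrank : C - 1 ≤ W₀.rank)
    (H : ℝ → Matrix (Fin p) (Fin C × Fin N) ℝ)
    (W : ℝ → Matrix (Fin C) (Fin p) ℝ)
    (b : ℝ → (Fin C → ℝ))
    (hH0 : H 0 = H₀) (hW0 : W 0 = W₀) (hb0 : b 0 = b₀)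
    (hH' : ∀ t ∈ Ici (0 : ℝ), HasDerivWithinAt H
      (-((W t)ᵀ * Amat C N p (H t) (W t) (b t))) (Ici 0) t)
    (hW' : ∀ t ∈ Ici (0 : ℝ), HasDerivWithinAt W
      (-(Amat C N p (H t) (W t) (b t) * (H t)ᵀ)) (Ici 0) t)
    (hb' : ∀ t ∈ Ici (0 : ℝ), HasDerivWithinAt b
      (fun c => -(∑ cn : Fin C × Fin N, Amat C N p (H t) (W t) (b t) c cn)) (Ici 0) t) :
    ∃ (Hlim : Matrix (Fin p) (Fin C × Fin N) ℝ) (Wlim : Matrix (Fin C) (Fin p) ℝ)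
      (blim : Fin C → ℝ),
      Tendsto H atTop (𝓝 Hlim) ∧ Tendsto W atTop (𝓝 Wlim) ∧ Tendsto b atTop (𝓝 blim) ∧
      Wlim * Wlimᵀ = Real.sqrt N •
        ((1 : Matrix (Fin C) (Fin C) ℝ) - (C : ℝ)⁻¹ • Matrix.of (fun _ _ => (1 : ℝ))) ∧
      Hlim = Matrix.of (fun j (cn : Fin C × Fin N) => (Real.sqrt N)⁻¹ * Wlim cn.1 j) ∧
      blim = fun _ => (C : ℝ)⁻¹ :=
  gradient_flow_limit_snc_general C N p hC hN H₀ W₀ b₀ hS0 hrank H W b hH0 hW0 hb0 hH' hW' hb'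
end
end
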